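/- arXiv:2602.11294 — 8 statements merged into one kernel-verified Lean document; each statement's English description precedes it below -/
import Mathlib

section
/- Let p₁, p₂ ∈ ℂ be two points and let q be a point such that the angle p₁ q p₂ equals 2π/3. Let p be the point such that the triangle p p₁ p₂ is equilateral and p lies on the opposite side of the line through p₁ and p₂ from q. Then |p - q| = |p₁ - q| + |p₂ - q|. -/
open EuclideanGeometry Real

theorem melzak_identity (p p₁ p₂ q : ℂ)
    (hangle : EuclideanGeometry.angle p₁ q p₂ = 2 * π / 3)
    (hequi₁ : dist p p₁ = dist p₁ p₂) (hequi₂ : dist p p₂ = dist p₁ p₂)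
    (hside : (affineSpan ℝ {p₁, p₂}).SOppSide p q) :
    dist p q = dist p₁ q + dist p₂ q := by
  have h2 : InnerProductGeometry.angle (p₁ - q) (p₂ - q) = 2*π/3 := hangle
  have hu : p₁ - q ≠ 0 := by
    intro h; rw [h, InnerProductGeometry.angle_zero_left] at h2; linarith [Real.pi_pos]
  have hv : p₂ - q ≠ 0 := by
    intro h; rw [h, InnerProductGeometry.angle_zero_right] at h2; linarith [Real.pi_pos]
  have ha0 : 0 < dist p₁ q := dist_pos.2 (sub_ne_zero.1 hu)
  have hb0 : 0 < dist p₂ q := dist_pos.2 (sub_ne_zero.1 hv)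
  -- law of cosines
  have hcos : Real.cos (EuclideanGeometry.angle p₁ q p₂) = -(1/2) := by
    rw [hangle, show (2*π/3 : ℝ) = π - π/3 by ring, Real.cos_pi_sub, Real.cos_pi_div_three]
  have hlc := EuclideanGeometry.law_cos p₁ q p₂
  rw [hcos] at hlc
  -- coordinates
  have hsq : ∀ z w : ℂ, dist z w ^ 2 = ((z-q).re - (w-q).re)^2 + ((z-q).im - (w-q).im)^2 := by
    intro z w
    rw [Complex.dist_eq, Complex.sq_norm, Complex.normSq_apply]
    simp only [Complex.sub_re, Complex.sub_im]
    ring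
  obtain ⟨a, ha'⟩ : ∃ r : ℝ, dist p₁ q = r := ⟨_, rfl⟩
  obtain ⟨b, hb'⟩ : ∃ r : ℝ, dist p₂ q = r := ⟨_, rfl⟩
  obtain ⟨x₁, hx₁⟩ : ∃ r : ℝ, (p₁ - q).re = r := ⟨_, rfl⟩
  obtain ⟨y₁, hy₁⟩ : ∃ r : ℝ, (p₁ - q).im = r := ⟨_, rfl⟩
  obtain ⟨x₂, hx₂⟩ : ∃ r : ℝ, (p₂ - q).re = r := ⟨_, rfl⟩
  obtain ⟨y₂, hy₂⟩ : ∃ r : ℝ, (p₂ - q).im = r := ⟨_, rfl⟩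
  obtain ⟨X, hX⟩ : ∃ r : ℝ, (p - q).re = r := ⟨_, rfl⟩
  obtain ⟨Y, hY⟩ : ∃ r : ℝ, (p - q).im = r := ⟨_, rfl⟩
  rw [ha'] at ha0
  rw [hb'] at hb0
  have ha2 : a ^ 2 = x₁^2 + y₁^2 := by
    rw [← ha', hsq p₁ q, hx₁, hy₁]; simp
  have hb2 : b ^ 2 = x₂^2 + y₂^2 := by
    rw [← hb', hsq p₂ q, hx₂, hy₂]; simp
  have hs2 : dist p₁ p₂ ^ 2 = (x₁ - x₂)^2 + (y₁-y₂)^2 := by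
    rw [hsq p₁ p₂, hx₁, hy₁, hx₂, hy₂]
  have h4 : (X - x₁)^2 + (Y - y₁)^2 = (x₁-x₂)^2 + (y₁-y₂)^2 := by
    have h := hsq p p₁
    rw [hequi₁, hs2, hX, hY, hx₁, hy₁] at h
    exact h.symm
  have h5 : (X - x₂)^2 + (Y - y₂)^2 = (x₁-x₂)^2 + (y₁-y₂)^2 := by
    have h := hsq p p₂
    rw [hequi₂, hs2, hX, hY, hx₂, hy₂] at h
    exact h.symm
  have h1 : x₁*x₂ + y₁*y₂ = -(a*b)/2 := by
    have hlc2 : dist p₁ p₂ ^ 2 = a^2 + b^2 + a*b := by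
      rw [sq, hlc, ha', hb']; ring
    rw [hs2] at hlc2
    linear_combination (-1/2 : ℝ) * hlc2 - (1/2) * ha2 - (1/2) * hb2
  -- nondegeneracy
  have hs2' : (0:ℝ) < (x₁-x₂)^2 + (y₁-y₂)^2 := by
    have hval : (x₁-x₂)^2 + (y₁-y₂)^2 = a^2 + b^2 + a*b := by
      linear_combination -ha2 - hb2 - 2*h1
    rw [hval]
    have v1 := mul_pos ha0 hb0
    have v2 := pow_pos ha0 2
    have v3 := pow_pos hb0 2
    linarith only [v1, v2, v3]
  have he : (0:ℝ) < (x₂-x₁)^2 + (y₂-y₁)^2 := by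
    have hh : (x₂-x₁)^2+(y₂-y₁)^2 = (x₁-x₂)^2+(y₁-y₂)^2 := by ring
    rw [hh]; exact hs2'
  have hdre : (p₂ - p₁).re = x₂ - x₁ := by
    have h : p₂ - p₁ = (p₂ - q) - (p₁ - q) := by ring
    rw [h, Complex.sub_re, hx₁, hx₂]
  have hdim : (p₂ - p₁).im = y₂ - y₁ := by
    have h : p₂ - p₁ = (p₂ - q) - (p₁ - q) := by ring
    rw [h, Complex.sub_im, hy₁, hy₂]
  have hpre : (p - p₁).re = X - x₁ := by
    have h : p - p₁ = (p - q) - (p₁ - q) := by ring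
    rw [h, Complex.sub_re, hX, hx₁]
  have hpim : (p - p₁).im = Y - y₁ := by
    have h : p - p₁ = (p - q) - (p₁ - q) := by ring
    rw [h, Complex.sub_im, hY, hy₁]
  -- membership criterion for the line
  have memF : ∀ z : ℂ, (z - p₁).im * (x₂-x₁) - (z - p₁).re * (y₂-y₁) = 0 →
      z ∈ affineSpan ℝ ({p₁, p₂} : Set ℂ) := by
    intro z hz
    obtain ⟨w₁, hw₁⟩ : ∃ r : ℝ, (z - p₁).re = r := ⟨_, rfl⟩
    obtain ⟨w₂, hw₂⟩ : ∃ r : ℝ, (z - p₁).im = r := ⟨_, rfl⟩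
    rw [hw₁, hw₂] at hz
    have hzp : z = (z - p₁) +ᵥ p₁ := by simp
    rw [hzp, vadd_left_mem_affineSpan_pair]
    refine ⟨(w₁*(x₂-x₁) + w₂*(y₂-y₁))/((x₂-x₁)^2+(y₂-y₁)^2), ?_⟩
    have hvs : (p₂ -ᵥ p₁ : ℂ) = p₂ - p₁ := rfl
    rw [hvs, Complex.real_smul]
    have hne := ne_of_gt he
    apply Complex.ext
    · rw [Complex.mul_re, Complex.ofReal_re, Complex.ofReal_im, hdre, hdim, hw₁]
      field_simp
      linear_combination (y₂-y₁)*hz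
    · rw [Complex.mul_im, Complex.ofReal_re, Complex.ofReal_im, hdre, hdim, hw₂]
      field_simp
      linear_combination -(x₂-x₁)*hz
  obtain ⟨hpn, hqn, c, hc, hray⟩ :=
    (AffineSubspace.sOppSide_iff_exists_left (s := affineSpan ℝ ({p₁, p₂} : Set ℂ))
      (left_mem_affineSpan_pair ℝ p₁ p₂)).1 hside
  have hGp : (Y-y₁) * (x₂-x₁) - (X-x₁) * (y₂-y₁) ≠ 0 := by
    intro h
    exact hpn (memF p (by rw [hpre, hpim]; exact h))
  have hGq : (-y₁) * (x₂-x₁) - (-x₁) * (y₂-y₁) ≠ 0 := by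
    intro h
    refine hqn (memF q ?_)
    have hqre : (q - p₁).re = -x₁ := by
      have hh : q - p₁ = -(p₁ - q) := by ring
      rw [hh, Complex.neg_re, hx₁]
    have hqim : (q - p₁).im = -y₁ := by
      have hh : q - p₁ = -(p₁ - q) := by ring
      rw [hh, Complex.neg_im, hy₁]
    rw [hqre, hqim]; exact h
  obtain ⟨t, ht⟩ : ∃ t : ℝ, t • (p₂ - p₁) = c - p₁ := by
    have hcp : c = (c - p₁) +ᵥ p₁ := by simp
    rw [hcp, vadd_left_mem_affineSpan_pair] at hc
    exact hc
  have hray' : SameRay ℝ (p - p₁) (c - q) := hray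
  have hcross : ((Y-y₁) * (x₂-x₁) - (X-x₁) * (y₂-y₁)) *
      ((-y₁) * (x₂-x₁) - (-x₁) * (y₂-y₁)) < 0 := by
    rcases hray' with h | h | ⟨r₁, r₂, hr₁, hr₂, hr⟩
    · exfalso
      rw [sub_eq_zero] at h
      exact hpn (h ▸ left_mem_affineSpan_pair ℝ p₁ p₂)
    · exfalso
      rw [sub_eq_zero] at h
      exact hqn (h ▸ hc)
    · have hcre : (c - q).re = t*(x₂-x₁) + x₁ := by
        have hh : c - q = (c - p₁) + (p₁ - q) := by ring
        rw [hh, Complex.add_re, ← ht, Complex.smul_re, hdre, hx₁, smul_eq_mul]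
      have hcim : (c - q).im = t*(y₂-y₁) + y₁ := by
        have hh : c - q = (c - p₁) + (p₁ - q) := by ring
        rw [hh, Complex.add_im, ← ht, Complex.smul_im, hdim, hy₁, smul_eq_mul]
      have hre := congrArg Complex.re hr
      have him := congrArg Complex.im hr
      rw [Complex.smul_re, Complex.smul_re, hpre, hcre, smul_eq_mul, smul_eq_mul] at hre
      rw [Complex.smul_im, Complex.smul_im, hpim, hcim, smul_eq_mul, smul_eq_mul] at him
      -- r₁ * Gp = - r₂ * Gq
      have hkey : r₁ * ((Y-y₁) * (x₂-x₁) - (X-x₁) * (y₂-y₁))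
          = - (r₂ * ((-y₁) * (x₂-x₁) - (-x₁) * (y₂-y₁))) := by
        linear_combination (x₂-x₁)*him - (y₂-y₁)*hre
      have hq2 : 0 < ((-y₁) * (x₂-x₁) - (-x₁) * (y₂-y₁)) *
          ((-y₁) * (x₂-x₁) - (-x₁) * (y₂-y₁)) := mul_self_pos.2 hGq
      have h8 : r₁ * (((Y-y₁) * (x₂-x₁) - (X-x₁) * (y₂-y₁)) *
          ((-y₁) * (x₂-x₁) - (-x₁) * (y₂-y₁)))
          = -(r₂ * (((-y₁) * (x₂-x₁) - (-x₁) * (y₂-y₁)) *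
            ((-y₁) * (x₂-x₁) - (-x₁) * (y₂-y₁)))) := by
        linear_combination ((-y₁) * (x₂-x₁) - (-x₁) * (y₂-y₁)) * hkey
      have h9 : 0 < r₂ * (((-y₁) * (x₂-x₁) - (-x₁) * (y₂-y₁)) *
          ((-y₁) * (x₂-x₁) - (-x₁) * (y₂-y₁))) := mul_pos hr₂ hq2
      by_contra hcon
      push_neg at hcon
      have h10 := mul_nonneg hr₁.le hcon
      linarith only [h8, h9, h10]
  -- main algebra
  have hA : 2*(X*x₁ + Y*y₁) = X^2+Y^2 - b^2 - a*b := by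
    linear_combination -h4 + hb2 + 2*h1
  have hB : 2*(X*x₂ + Y*y₂) = X^2+Y^2 - a^2 - a*b := by
    linear_combination -h5 + ha2 + 2*h1
  have hcsq : (x₁*y₂ - x₂*y₁)^2 = 3*(a*b)^2/4 := by
    linear_combination (-(x₂^2+y₂^2))*ha2 - a^2*hb2 - (x₁*x₂+y₁*y₂ - a*b/2)*h1
  have hi4 : 3*(a*b)^2*(X^2+Y^2) = (2*(X*x₁+Y*y₁))^2*b^2 + (2*(X*x₂+Y*y₂))^2*a^2
      + (2*(X*x₁+Y*y₁))*(2*(X*x₂+Y*y₂))*(a*b) := by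
    linear_combination (-4*(X^2+Y^2))*hcsq - 4*(X*x₁+Y*y₁)^2*hb2 - 4*(X*x₂+Y*y₂)^2*ha2
      - 8*(X*x₁+Y*y₁)*(X*x₂+Y*y₂)*h1
  rw [hA, hB] at hi4
  have hEeq : (X*x₁+Y*y₁)*b^2 + (X*x₂+Y*y₂)*a^2 + ((X*x₁+Y*y₁)+(X*x₂+Y*y₂))*(a*b/2)
      - 3*(a*b)^2/4
      = -(((Y-y₁)*(x₂-x₁) - (X-x₁)*(y₂-y₁)) * ((-y₁)*(x₂-x₁) - (-x₁)*(y₂-y₁))) := by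
    linear_combination (X*x₁+Y*y₁)*hb2 + (X*x₂+Y*y₂)*ha2
      + ((X*x₁+Y*y₁)+(X*x₂+Y*y₂))*h1 + hcsq
  have h7 : (2*(X*x₁+Y*y₁))*(2*b^2+a*b) + (2*(X*x₂+Y*y₂))*(2*a^2+a*b) - 3*a^2*b^2 > 0 := by
    linarith only [hcross, hEeq]
  rw [hA, hB] at h7
  have hfac : (a^2+a*b+b^2) * ((X^2+Y^2) - (a+b)^2) * ((X^2+Y^2) - (a^2-a*b+b^2)) = 0 := by
    linear_combination -hi4
  have habpos : (0:ℝ) < a^2+a*b+b^2 := by positivity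
  have hSval : X^2+Y^2 = (a+b)^2 := by
    rcases mul_eq_zero.1 hfac with h | h
    · rcases mul_eq_zero.1 h with h' | h'
      · exact absurd h' (ne_of_gt habpos)
      · linarith
    · exfalso
      have hSe : X^2+Y^2 = a^2 - a*b + b^2 := by linarith
      rw [hSe] at h7
      have p1 : (0:ℝ) < a^3*b := by positivity
      have p2 : (0:ℝ) < a*b^3 := by positivity
      have p3 : (0:ℝ) < a^2*b^2 := by positivity
      linarith only [h7, p1, p2, p3]
  have hdq : dist p q ^ 2 = (a+b)^2 := by
    rw [hsq p q, hX, hY]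
    simp only [sub_self, Complex.zero_re, Complex.zero_im, sub_zero]
    exact hSval
  rw [ha', hb']
  calc dist p q = √(dist p q ^ 2) := (Real.sqrt_sq dist_nonneg).symm
    _ = √((a+b)^2) := by rw [hdq]
    _ = a + b := Real.sqrt_sq (by positivity)
end

section
/- Let four points p, p₁, q, p₂ lie on a common circle in this cyclic order. Then |p - q| · |p₁ - p₂| = |p₁ - q| · |p - p₂| + |p₂ - q| · |p - p₁| (Ptolemy's equality for a cyclic quadrilateral). -/
open Real Complex

/-!
The chord between the points of angles `α ≤ β ≤ α + 2π` on a circle of radius `R` has length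
`2 |R| sin ((β - α) / 2)`, the sine being nonnegative since the arc is at most a full turn.
At the half-angles, Ptolemy's equality thus becomes the identity
`sin (y - w) sin (z - x) = sin (x - w) sin (z - y) + sin (y - x) sin (z - w)`,
a consequence of the addition formulas.
-/

theorem Complex.norm_exp_mul_I_sub_exp_mul_I (α β : ℝ) :
    ‖exp (α * I) - exp (β * I)‖ = 2 * |Real.sin ((α - β) / 2)| := by
  set s := (α + β) / 2
  set d := (α - β) / 2
  have hα : (α : ℂ) * I = s * I + d * I := by push_cast [s, d]; ring
  have hβ : (β : ℂ) * I = s * I + (-d : ℝ) * I := by push_cast [s, d]; ring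
  have h : exp (α * I) - exp (β * I) = exp (s * I) * ((2 * Real.sin d : ℝ) * I) := by
    rw [hα, hβ]
    simp only [exp_add, exp_mul_I]
    push_cast
    rw [Complex.cos_neg, Complex.sin_neg]
    ring
  rw [h, norm_mul, norm_exp_ofReal_mul_I, norm_mul, norm_real, norm_I, Real.norm_eq_abs, abs_mul,
    abs_two]
  ring

theorem Complex.dist_add_mul_exp_mul_I (o : ℂ) (R : ℝ) {α β : ℝ} (hαβ : α ≤ β)
    (hβα : β ≤ α + 2 * π) :
    dist (o + R * exp (α * I)) (o + R * exp (β * I)) = 2 * |R| * Real.sin ((β - α) / 2) := by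
  rw [dist_eq, add_sub_add_left_eq_sub, ← mul_sub, norm_mul, norm_real, Real.norm_eq_abs,
    norm_exp_mul_I_sub_exp_mul_I, show (α - β) / 2 = -((β - α) / 2) by ring, Real.sin_neg,
    abs_neg, abs_of_nonneg (Real.sin_nonneg_of_nonneg_of_le_pi (by linarith) (by linarith))]
  ring

theorem Real.sin_sub_mul_sin_sub (w x y z : ℝ) :
    sin (y - w) * sin (z - x) = sin (x - w) * sin (z - y) + sin (y - x) * sin (z - w) := by
  have hyw : y - w = (x - w) + (y - x) := by ring
  have hzx : z - x = (y - x) + (z - y) := by ring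
  have hzw : z - w = (x - w) + (y - x) + (z - y) := by ring
  rw [hyw, hzx, hzw, sin_add, sin_add, sin_add, sin_add, cos_add]
  linear_combination sin (x - w) * sin (z - y) * sin_sq_add_cos_sq (y - x)

theorem ptolemy_cyclic_general (o : ℂ) (R : ℝ) (θ θ₁ θq θ₂ : ℝ)
    (h₁ : θ < θ₁) (h₂ : θ₁ < θq) (h₃ : θq < θ₂) (h₄ : θ₂ < θ + 2 * π)
    (p p₁ q p₂ : ℂ)
    (hp : p = o + R * Complex.exp (θ * Complex.I))
    (hp₁ : p₁ = o + R * Complex.exp (θ₁ * Complex.I))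
    (hq : q = o + R * Complex.exp (θq * Complex.I))
    (hp₂ : p₂ = o + R * Complex.exp (θ₂ * Complex.I)) :
    dist p q * dist p₁ p₂ = dist p₁ q * dist p p₂ + dist p₂ q * dist p p₁ := by
  subst hp hp₁ hq hp₂
  rw [dist_comm (o + R * exp (θ₂ * I)), dist_add_mul_exp_mul_I o R (α := θ) (β := θq),
    dist_add_mul_exp_mul_I o R (α := θ₁) (β := θ₂),
    dist_add_mul_exp_mul_I o R (α := θ₁) (β := θq), dist_add_mul_exp_mul_I o R (α := θ) (β := θ₂),
    dist_add_mul_exp_mul_I o R (α := θq) (β := θ₂), dist_add_mul_exp_mul_I o R (α := θ) (β := θ₁)]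
  · have key := Real.sin_sub_mul_sin_sub (θ / 2) (θ₁ / 2) (θq / 2) (θ₂ / 2)
    simp only [← sub_div] at key
    linear_combination (4 * |R| ^ 2) * key
  all_goals linarith

/-- Ptolemy's equality for a cyclic quadrilateral `p p₁ q p₂`:
the four points lie on a common circle (center `o`, radius `R`) in this cyclic
order, encoded by strictly increasing angular parameters within one turn. -/
theorem ptolemy_cyclic (o : ℂ) (R : ℝ) (hR : 0 < R) (θ θ₁ θq θ₂ : ℝ)
    (h₁ : θ < θ₁) (h₂ : θ₁ < θq) (h₃ : θq < θ₂) (h₄ : θ₂ < θ + 2 * π)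
    (p p₁ q p₂ : ℂ)
    (hp : p = o + R * Complex.exp (θ * Complex.I))
    (hp₁ : p₁ = o + R * Complex.exp (θ₁ * Complex.I))
    (hq : q = o + R * Complex.exp (θq * Complex.I))
    (hp₂ : p₂ = o + R * Complex.exp (θ₂ * Complex.I)) :
    dist p q * dist p₁ p₂ = dist p₁ q * dist p p₂ + dist p₂ q * dist p p₁ :=
  ptolemy_cyclic_general o R θ θ₁ θq θ₂ h₁ h₂ h₃ h₄ p p₁ q p₂ hp hp₁ hq hp₂
end

section
/- Let G be a finite tree embedded in ℂ with vertex set v₁, …, v_{n+s}, where v₁, …, v_n are the terminals and v_{n+1}, …, v_{n+s} are branching points, edges being straight segments. Suppose that at every branching point v_k (k > n), the sum over edges (k,j) of the unit vectors (v_k − v_j)/|v_k − v_j| is zero. For each terminal p_k = v_k (k ≤ n), suppose p_k has a unique incident edge, and let c_k be the unit complex number in the direction of that edge pointing away from the tree into p_k. Then the total length of the tree, i.e. the sum of |v_k − v_j| over all edges, equals Σ_{k=1}^n conj(c_k) · p_k. In particular this sum is a real number. -/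
/-!
Write `u k j` for the unit vector from `v j` to `v k`. For every edge, `conj (u k j) * (v k - v j)`
is its length, and `u j k = -u k j`; so summing `conj (u k j) * v k` over both orientations of all
edges gives twice the total length. Grouping that sum by the vertex `k` instead, the coefficient of
`v k` is the conjugate of the net unit direction at `k`: zero at a balanced vertex and `conj (c k)`
at a terminal.
-/

open Finset ComplexConjugate

lemma Complex.conj_div_norm_mul_self (z : ℂ) : conj (z / (‖z‖ : ℂ)) * z = ‖z‖ := by
  rcases eq_or_ne z 0 with rfl | hz
  · simp
  have hnorm : (‖z‖ : ℂ) ≠ 0 := by exact_mod_cast norm_ne_zero_iff.mpr hz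
  rw [map_div₀, Complex.conj_ofReal, div_mul_eq_mul_div, Complex.conj_mul', sq,
    mul_div_assoc, div_self hnorm, mul_one]

namespace SimpleGraph

variable {V : Type*} [Fintype V] (G : SimpleGraph V) [DecidableRel G.Adj] (v : V → ℂ)

noncomputable def netDirection (k : V) : ℂ :=
  ∑ j ∈ univ.filter (fun j => G.Adj k j), (v k - v j) / (‖v k - v j‖ : ℂ)

lemma conj_netDirection_mul (k : V) :
    conj (G.netDirection v k) * v k =
      ∑ j, if G.Adj k j then conj ((v k - v j) / (‖v k - v j‖ : ℂ)) * v k else 0 := by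
  rw [netDirection, map_sum, sum_mul, sum_filter]

lemma sum_adj_norm_sub_eq_two_mul_sum_conj_netDirection_mul :
    ((∑ k, ∑ j, if G.Adj k j then ‖v k - v j‖ else 0 : ℝ) : ℂ) =
      2 * ∑ k, conj (G.netDirection v k) * v k := by
  set F : V → V → ℂ := fun k j =>
    if G.Adj k j then conj ((v k - v j) / (‖v k - v j‖ : ℂ)) * v k else 0
  have hedge : ∀ k j, F k j + F j k = if G.Adj k j then (‖v k - v j‖ : ℂ) else 0 := by
    intro k j
    by_cases hkj : G.Adj k j
    · have hopp : (v j - v k) / (‖v j - v k‖ : ℂ) = -((v k - v j) / (‖v k - v j‖ : ℂ)) := by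
        rw [norm_sub_rev, ← neg_div, neg_sub]
      simp only [F, if_pos hkj, if_pos hkj.symm, hopp, map_neg, neg_mul, ← sub_eq_add_neg,
        ← mul_sub, Complex.conj_div_norm_mul_self]
    · simp only [F, if_neg hkj, if_neg (mt G.adj_symm hkj), add_zero]
  calc ((∑ k, ∑ j, if G.Adj k j then ‖v k - v j‖ else 0 : ℝ) : ℂ)
      = ∑ k, ∑ j, (F k j + F j k) := by
        push_cast
        simp only [hedge, apply_ite Complex.ofReal, Complex.ofReal_zero]
    _ = 2 * ∑ k, ∑ j, F k j := by
        rw [two_mul]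
        simp only [sum_add_distrib]
        exact congrArg _ sum_comm
    _ = 2 * ∑ k, conj (G.netDirection v k) * v k := by
        simp only [F, conj_netDirection_mul]

lemma netDirection_eq_of_existsUnique_adj {k : V} (hk : ∃! j, G.Adj k j) {c : ℂ}
    (hc : ∀ j, G.Adj k j → c = (v k - v j) / (‖v k - v j‖ : ℂ)) :
    G.netDirection v k = c := by
  obtain ⟨j₀, hj₀, huniq⟩ := hk
  have hnbrs : univ.filter (fun j => G.Adj k j) = {j₀} := by
    ext j
    simpa using ⟨huniq j, fun h => h ▸ hj₀⟩
  rw [netDirection, hnbrs, sum_singleton, hc j₀ hj₀]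

end SimpleGraph

theorem maxwell_formula_general (n s : ℕ)
    (G : SimpleGraph (Fin (n + s))) [DecidableRel G.Adj]
    (v : Fin (n + s) → ℂ)
    (c : Fin n → ℂ)
    (hbal : ∀ k : Fin (n + s), n ≤ (k : ℕ) →
      ∑ j ∈ Finset.univ.filter (fun j => G.Adj k j),
        (v k - v j) / (‖v k - v j‖ : ℂ) = 0)
    (hterm : ∀ k : Fin n, ∃! j, G.Adj (Fin.castAdd s k) j)
    (hc : ∀ (k : Fin n) (j : Fin (n + s)), G.Adj (Fin.castAdd s k) j →
      c k = (v (Fin.castAdd s k) - v j) / (‖v (Fin.castAdd s k) - v j‖ : ℂ)) :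
    (((1 / 2 : ℝ) * ∑ k, ∑ j, if G.Adj k j then dist (v k) (v j) else 0 : ℝ) : ℂ)
      = ∑ k : Fin n, (starRingEnd ℂ) (c k) * v (Fin.castAdd s k) := by
  have hterminal (k : Fin n) : G.netDirection v (Fin.castAdd s k) = c k :=
    G.netDirection_eq_of_existsUnique_adj v (hterm k) (hc k)
  have hbranch (i : Fin s) : G.netDirection v (Fin.natAdd n i) = 0 :=
    hbal _ (by simp)
  simp only [Complex.dist_eq]
  rw [Complex.ofReal_mul, G.sum_adj_norm_sub_eq_two_mul_sum_conj_netDirection_mul v,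
    Fin.sum_univ_add]
  simp only [hterminal, hbranch, map_zero, zero_mul, sum_const_zero, add_zero]
  push_cast
  ring

/-- Maxwell-type formula: for a finite tree embedded in `ℂ` with straight edges,
vertices `v 0, …, v (n+s-1)` where the first `n` are terminals (unique incident
edge, with outer unit direction `c k`) and the balancing condition holds at all
other vertices, the total length equals `∑ conj (c k) * p k`. -/
theorem maxwell_formula (n s : ℕ) (hn : 1 < n)
    (G : SimpleGraph (Fin (n + s))) [DecidableRel G.Adj] (hG : G.IsTree)
    (v : Fin (n + s) → ℂ) (hv : Function.Injective v)
    (c : Fin n → ℂ)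
    (hbal : ∀ k : Fin (n + s), n ≤ (k : ℕ) →
      ∑ j ∈ Finset.univ.filter (fun j => G.Adj k j),
        (v k - v j) / (‖v k - v j‖ : ℂ) = 0)
    (hterm : ∀ k : Fin n, ∃! j, G.Adj (Fin.castAdd s k) j)
    (hc : ∀ (k : Fin n) (j : Fin (n + s)), G.Adj (Fin.castAdd s k) j →
      c k = (v (Fin.castAdd s k) - v j) / (‖v (Fin.castAdd s k) - v j‖ : ℂ)) :
    (((1 / 2 : ℝ) * ∑ k, ∑ j, if G.Adj k j then dist (v k) (v j) else 0 : ℝ) : ℂ)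
      = ∑ k : Fin n, (starRingEnd ℂ) (c k) * v (Fin.castAdd s k) :=
  maxwell_formula_general n s G v c hbal hterm hc
end

section
/- Let S ⊆ ℝᵈ be a measurable set with finite 1-dimensional Hausdorff measure and let x ∈ ℝᵈ. Then H¹(S) ≥ ∫₀^∞ #(S ∩ ∂B_r(x)) dr, where #(S ∩ ∂B_r(x)) denotes the number of points of S at distance exactly r from x (interpreted as ∞ if infinite). -/
open MeasureTheory Set ENNReal Filter

theorem coarea_inequality_aux {X : Type*} [MetricSpace X] [MeasurableSpace X]
    [BorelSpace X] (S : Set X) (hfin : μH[1] S < ⊤) (x : X) :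
    ∫⁻ r in Set.Ioi (0 : ℝ), ((S ∩ Metric.sphere x r).encard : ℝ≥0∞)
      ≤ μH[1] S := by
  classical
  set f : X → ℝ := fun y => dist y x with hfdef
  refine ENNReal.le_of_forall_pos_le_add fun ε hε htop => ?_
  have hεne : (ε : ℝ≥0∞) ≠ 0 := by exact_mod_cast hε.ne'
  -- choose a (1/(n+1))-cover for each n with total length at most μH[1] S + ε
  have hcov : ∀ n : ℕ, ∃ t : ℕ → Set X,
      (S ⊆ ⋃ i, t i) ∧ (∀ i, EMetric.diam (t i) ≤ ((n : ℝ≥0∞) + 1)⁻¹) ∧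
      ∑' i, ⨆ _ : (t i).Nonempty, EMetric.diam (t i) ≤ μH[1] S + ε := by
    intro n
    have hne_top : ((n : ℝ≥0∞) + 1) ≠ ⊤ := by simp
    have hpos : (0 : ℝ≥0∞) < ((n : ℝ≥0∞) + 1)⁻¹ := ENNReal.inv_pos.2 hne_top
    have h1 : (⨅ (t : ℕ → Set X) (_ : S ⊆ ⋃ i, t i)
        (_ : ∀ i, EMetric.diam (t i) ≤ ((n : ℝ≥0∞) + 1)⁻¹),
          ∑' i, ⨆ _ : (t i).Nonempty, EMetric.diam (t i) ^ (1 : ℝ)) ≤ μH[1] S := by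
      rw [MeasureTheory.Measure.hausdorffMeasure_apply]
      exact le_iSup₂ (f := fun r (_ : (0:ℝ≥0∞) < r) =>
        ⨅ (t : ℕ → Set X) (_ : S ⊆ ⋃ i, t i) (_ : ∀ i, EMetric.diam (t i) ≤ r),
          ∑' i, ⨆ _ : (t i).Nonempty, EMetric.diam (t i) ^ (1 : ℝ)) _ hpos
    have h2 := h1.trans_lt (ENNReal.lt_add_right htop.ne hεne)
    simp only [iInf_lt_iff] at h2
    obtain ⟨t, hsub, hdiam, hsum⟩ := h2
    refine ⟨t, hsub, hdiam, le_of_lt ?_⟩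
    simpa [ENNReal.rpow_one] using hsum
  choose t htsub htdiam htsum using hcov
  have hdiamne : ∀ n i, EMetric.diam (t n i) ≠ ⊤ := by
    intro n i
    have hinvne : ((n : ℝ≥0∞) + 1)⁻¹ ≠ ⊤ := by
      simp [ENNReal.inv_eq_top]
    exact ne_top_of_le_ne_top hinvne (htdiam n i)
  -- intervals containing the images f '' (t n i)
  set J : ℕ → ℕ → Set ℝ := fun n i =>
    if (t n i).Nonempty then
      Icc (sInf (f '' t n i)) (sInf (f '' t n i) + (EMetric.diam (t n i)).toReal)
    else ∅ with hJdef
  have hJmeas : ∀ n i, MeasurableSet (J n i) := by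
    intro n i
    simp only [hJdef]
    split <;> [exact measurableSet_Icc; exact MeasurableSet.empty]
  have hfmem : ∀ n i, ∀ y ∈ t n i, f y ∈ J n i := by
    intro n i y hy
    have hne : (t n i).Nonempty := ⟨y, hy⟩
    have hbdd : BddBelow (f '' t n i) :=
      ⟨0, fun v ⟨w, _, hw⟩ => hw ▸ dist_nonneg⟩
    have hD : ∀ z ∈ t n i, ∀ w ∈ t n i, dist z w ≤ (EMetric.diam (t n i)).toReal := by
      intro z hz w hw
      rw [dist_edist]
      exact ENNReal.toReal_mono (hdiamne n i) (EMetric.edist_le_diam_of_mem hz hw)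
    simp only [hJdef, if_pos hne, mem_Icc]
    constructor
    · exact csInf_le hbdd ⟨y, hy, rfl⟩
    · have hlb : f y - (EMetric.diam (t n i)).toReal ∈ lowerBounds (f '' t n i) := by
        rintro v ⟨w, hw, rfl⟩
        have h1 : |f y - f w| ≤ dist y w := abs_dist_sub_le y w x
        have h2 := hD y hy w hw
        have h3 := abs_le.1 h1
        have h4 := h3.1
        have h5 := h3.2
        simp only [hfdef] at h4 h5 ⊢
        linarith
      have := le_csInf (hne.image f) hlb
      linarith
  -- counting functions
  set g : ℕ → ℝ → ℝ≥0∞ := fun n r => ∑' i, (J n i).indicator (1 : ℝ → ℝ≥0∞) r with hgdef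
  have hgmeas : ∀ n, Measurable (g n) :=
    fun n => Measurable.ennreal_tsum fun i => measurable_one.indicator (hJmeas n i)
  -- pointwise bound: the number of sphere points is at most liminf g n r
  have hpt : ∀ r : ℝ, ((S ∩ Metric.sphere x r).encard : ℝ≥0∞)
      ≤ liminf (fun n => g n r) atTop := by
    intro r
    have key : ∀ F : Finset X, ↑F ⊆ S ∩ Metric.sphere x r →
        (F.card : ℝ≥0∞) ≤ liminf (fun n => g n r) atTop := by
      intro F hF
      set m : ℝ≥0∞ := (F.offDiag).inf (fun p => edist p.1 p.2) with hmdef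
      have hm : 0 < m := by
        rw [hmdef, Finset.lt_inf_iff (by simp : (0:ℝ≥0∞) < ⊤)]
        rintro ⟨y, z⟩ hyz
        rw [Finset.mem_offDiag] at hyz
        simpa [edist_pos] using hyz.2.2
      obtain ⟨n₀, hn₀⟩ := ENNReal.exists_inv_nat_lt hm.ne'
      refine Filter.le_liminf_of_le (by isBoundedDefault) ?_
      filter_upwards [eventually_ge_atTop n₀] with n hn
      have hsmall : ((n : ℝ≥0∞) + 1)⁻¹ < m := by
        refine lt_of_le_of_lt ?_ hn₀
        refine ENNReal.inv_le_inv.2 ?_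
        have h6 : (n₀ : ℝ≥0∞) ≤ (n : ℝ≥0∞) := by exact_mod_cast hn
        exact h6.trans (le_add_of_nonneg_right zero_le_one)
      have hmem : ∀ y : F, ∃ i, (y : X) ∈ t n i := by
        intro y
        exact Set.mem_iUnion.1 (htsub n (hF y.2).1)
      choose φ hφ using hmem
      have hinj : Function.Injective φ := by
        intro y z hyz
        by_contra hne
        have hyzne : (y : X) ≠ (z : X) := fun h => hne (Subtype.ext h)
        have h1 : edist (y : X) (z : X) ≤ EMetric.diam (t n (φ y)) :=
          EMetric.edist_le_diam_of_mem (hφ y) (hyz ▸ hφ z)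
        have h2 : m ≤ edist (y : X) (z : X) := by
          have hmo : ((y : X), (z : X)) ∈ F.offDiag :=
            Finset.mem_offDiag.2 ⟨y.2, z.2, hyzne⟩
          exact Finset.inf_le hmo
        exact absurd (h2.trans (h1.trans (htdiam n (φ y)))) (not_le.2 hsmall)
      have hval : ∀ i ∈ Finset.univ.image φ, (J n i).indicator (1 : ℝ → ℝ≥0∞) r = 1 := by
        intro i hi
        obtain ⟨y, _, rfl⟩ := Finset.mem_image.1 hi
        have hy : f (y : X) ∈ J n (φ y) := hfmem n (φ y) _ (hφ y)
        have hr : f (y : X) = r := (hF y.2).2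
        rw [hr] at hy
        simp [Set.indicator_of_mem hy]
      calc (F.card : ℝ≥0∞) = ((Finset.univ.image φ).card : ℝ≥0∞) := by
            rw [Finset.card_image_of_injective _ hinj]
            simp
        _ = ∑ i ∈ Finset.univ.image φ, (J n i).indicator (1 : ℝ → ℝ≥0∞) r := by
            rw [Finset.sum_congr rfl hval]
            simp
        _ ≤ g n r := ENNReal.sum_le_tsum _
    rcases (S ∩ Metric.sphere x r).finite_or_infinite with hfin' | hinf
    · rw [hfin'.encard_eq_coe_toFinset_card]
      have := key hfin'.toFinset (by simp)
      simpa using this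
    · rw [hinf.encard_eq]
      simp only [ENat.toENNReal_top]
      by_contra h'
      have hlt : liminf (fun n => g n r) atTop < ⊤ := lt_top_iff_ne_top.2
        fun h => h' (h ▸ le_refl _)
      obtain ⟨k, hk⟩ := ENNReal.exists_nat_gt hlt.ne
      obtain ⟨F, hFsub, hFcard⟩ := hinf.exists_subset_card_eq k
      have := key F hFsub
      rw [hFcard] at this
      exact absurd (this.trans_lt hk) (lt_irrefl _)
  -- integral bound for each g n
  have hint : ∀ n, ∫⁻ r in Set.Ioi (0 : ℝ), g n r ≤ μH[1] S + ε := by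
    intro n
    rw [hgdef]
    simp only
    rw [lintegral_tsum fun i => (measurable_one.indicator (hJmeas n i)).aemeasurable]
    refine le_trans (ENNReal.tsum_le_tsum fun i => ?_) (htsum n)
    rw [lintegral_indicator_one (hJmeas n i), Measure.restrict_apply (hJmeas n i)]
    refine le_trans (measure_mono Set.inter_subset_left) ?_
    by_cases hne : (t n i).Nonempty
    · rw [hJdef]
      simp only [if_pos hne, Real.volume_Icc, add_sub_cancel_left]
      rw [ENNReal.ofReal_toReal (hdiamne n i)]
      exact le_iSup (fun _ : (t n i).Nonempty => EMetric.diam (t n i)) hne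
    · rw [hJdef]
      simp [if_neg hne]
  -- conclude via Fatou
  calc ∫⁻ r in Set.Ioi (0 : ℝ), ((S ∩ Metric.sphere x r).encard : ℝ≥0∞)
      ≤ ∫⁻ r in Set.Ioi (0 : ℝ), liminf (fun n => g n r) atTop :=
        lintegral_mono fun r => hpt r
    _ ≤ liminf (fun n => ∫⁻ r in Set.Ioi (0 : ℝ), g n r) atTop :=
        lintegral_liminf_le fun n => hgmeas n
    _ ≤ μH[1] S + ε :=
        liminf_le_of_frequently_le (Frequently.of_forall hint)

/-- Coarea inequality: the 1-dimensional Hausdorff measure of a measurable set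
`S ⊆ ℝᵈ` dominates the integral over `r > 0` of the number of points of `S` on
the sphere of radius `r` about `x`. -/
theorem coarea_inequality (d : ℕ) (S : Set (EuclideanSpace ℝ (Fin d)))
    (hS : MeasurableSet S) (hfin : μH[1] S < ⊤) (x : EuclideanSpace ℝ (Fin d)) :
    ∫⁻ r in Set.Ioi (0 : ℝ), ((S ∩ Metric.sphere x r).encard : ℝ≥0∞)
      ≤ μH[1] S :=
  coarea_inequality_aux S hfin x
end

section
/- Let A ⊆ ℝ² be the terminal set of a Steiner tree St, and suppose the open disk B_r(x) is disjoint from A. Then H¹(St ∩ B_r(x)) ≤ 2πr. -/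
/-!
Cutting a Steiner tree `St` along the circle `∂B_r(x)` and adding the whole circle gives a
competitor `(St \ B_r(x)) ∪ ∂B_r(x)`: any component of `St ∪ A` that was joined through the disk
is now joined through its boundary, and since the disk misses `A` nothing else changes. Its
length is at most `H¹(St \ B_r(x)) + 2πr`, so minimality and `H¹(St) < ∞` leave
`H¹(St ∩ B_r(x)) ≤ 2πr`.
-/

open MeasureTheory Set Real Metric

theorem IsPreconnected.sdiff_union_of_frontier_subset {X : Type*} [TopologicalSpace X]
    {Z U K : Set X} (hZ : IsPreconnected Z) (hK : IsPreconnected K) (hU : IsOpen U)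
    (hfrontier : frontier U ⊆ K) (hZU : (Z ∩ U).Nonempty) :
    IsPreconnected ((Z \ U) ∪ K) := by
  rw [isPreconnected_iff_subset_of_disjoint] at hZ hK ⊢
  suffices key : ∀ u v : Set X, IsOpen u → IsOpen v → (Z \ U) ∪ K ⊆ u ∪ v →
      ((Z \ U) ∪ K) ∩ (u ∩ v) = ∅ → K ⊆ u → (Z \ U) ∪ K ⊆ u by
    intro u v hu hv hcover hdisj
    have hKdisj : K ∩ (u ∩ v) = ∅ :=
      subset_empty_iff.mp (hdisj ▸ inter_subset_inter_left _ subset_union_right)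
    rcases hK u v hu hv (subset_union_right.trans hcover) hKdisj with hKu | hKv
    · exact .inl (key u v hu hv hcover hdisj hKu)
    · exact .inr (key v u hv hu (hcover.trans (union_comm u v).le)
        (by rwa [inter_comm v u]) hKv)
  intro u v hu hv hcover hdisj hKu
  have hnot_uv : ∀ z ∈ (Z \ U) ∪ K, z ∈ u → z ∉ v := fun z hz hzu hzv =>
    (hdisj ▸ (⟨hz, hzu, hzv⟩ : z ∈ ((Z \ U) ∪ K) ∩ (u ∩ v)) : z ∈ (∅ : Set X))
  -- Outside `U`, a point of `Z` in `v` but in `closure U` lies on `frontier U ⊆ K ⊆ u`.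
  have hZcover : Z ⊆ (u ∪ U) ∪ (v \ closure U) := by
    intro z hz
    by_cases hzU : z ∈ U
    · exact .inl (.inr hzU)
    rcases hcover (.inl ⟨hz, hzU⟩) with hzu | hzv
    · exact .inl (.inl hzu)
    by_cases hzcl : z ∈ closure U
    · exact .inl (.inl (hKu (hfrontier ⟨hzcl, by rwa [hU.interior_eq]⟩)))
    · exact .inr ⟨hzv, hzcl⟩
  have hZdisj : Z ∩ ((u ∪ U) ∩ (v \ closure U)) = ∅ := by
    refine eq_empty_of_forall_notMem fun z ⟨hz, hzuU, hzv, hzcl⟩ => ?_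
    have hzU : z ∉ U := fun h => hzcl (subset_closure h)
    exact hnot_uv z (.inl ⟨hz, hzU⟩) (hzuU.resolve_right hzU) hzv
  rcases hZ _ _ (hu.union hU) (hv.sdiff isClosed_closure) hZcover hZdisj with hZu | hZv
  · rintro z (⟨hz, hzU⟩ | hzK)
    exacts [(hZu hz).resolve_right hzU, hKu hzK]
  · obtain ⟨z, hz, hzU⟩ := hZU
    exact absurd (subset_closure hzU) (hZv hz).2

theorem IsConnected.sdiff_ball_union_sphere {E : Type*} [NormedAddCommGroup E] [NormedSpace ℝ E]
    (hE : 1 < Module.rank ℝ E) {Z : Set E} (hZ : IsPreconnected Z) {x : E} {r : ℝ}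
    (hZr : (Z ∩ ball x r).Nonempty) :
    IsConnected ((Z \ ball x r) ∪ sphere x r) := by
  have hr : 0 < r := nonempty_ball.mp (hZr.mono inter_subset_right)
  have hsphere := isConnected_sphere hE x hr.le
  refine ⟨hsphere.nonempty.mono subset_union_right, ?_⟩
  exact hZ.sdiff_union_of_frontier_subset hsphere.isPreconnected isOpen_ball
    (frontier_ball x hr.ne').le hZr

theorem Complex.hausdorffMeasure_sphere_le (c : ℂ) {r : ℝ} (hr : 0 ≤ r) :
    μH[1] (sphere c r) ≤ ENNReal.ofReal (2 * π * r) := by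
  calc μH[1] (sphere c r) = μH[1] (circleMap c r '' Ioc 0 (2 * π)) := by
        rw [image_circleMap_Ioc, abs_of_nonneg hr]
    _ ≤ nnabs r ^ (1 : ℝ) * μH[1] (Ioc 0 (2 * π)) :=
        (lipschitzWith_circleMap c r).hausdorffMeasure_image_le zero_le_one _
    _ = ENNReal.ofReal (2 * π * r) := by
        rw [hausdorffMeasure_real, Real.volume_Ioc, ENNReal.rpow_one, sub_zero, mul_comm,
          ENNReal.ofReal_mul two_pi_pos.le, Real.nnabs_of_nonneg hr]
        rfl

theorem EuclideanSpace.hausdorffMeasure_sphere_le (x : EuclideanSpace ℝ (Fin 2)) {r : ℝ}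
    (hr : 0 ≤ r) : μH[1] (sphere x r) ≤ ENNReal.ofReal (2 * π * r) := by
  let e := Complex.orthonormalBasisOneI.repr.toIsometryEquiv.symm
  rw [← e.symm_apply_apply x, ← e.preimage_sphere, e.hausdorffMeasure_preimage]
  exact Complex.hausdorffMeasure_sphere_le _ hr

theorem MeasureTheory.measure_inter_le_of_le_measure_sdiff_union {α : Type*} [MeasurableSpace α]
    {μ : Measure α} {s t c : Set α} (ht : MeasurableSet t) (hs : μ s ≠ ⊤)
    (hle : μ s ≤ μ ((s \ t) ∪ c)) : μ (s ∩ t) ≤ μ c := by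
  have hdiff : μ (s \ t) ≠ ⊤ := measure_ne_top_of_subset sdiff_subset hs
  refine (ENNReal.add_le_add_iff_right hdiff).mp ?_
  calc μ (s ∩ t) + μ (s \ t) = μ s := measure_inter_add_sdiff s ht
    _ ≤ μ ((s \ t) ∪ c) := hle
    _ ≤ μ (s \ t) + μ c := measure_union_le _ _
    _ = μ c + μ (s \ t) := add_comm _ _

theorem steiner_ball_length_le_general (A St : Set (EuclideanSpace ℝ (Fin 2)))
    (hconn : IsConnected (St ∪ A))
    (hmin : ∀ S : Set (EuclideanSpace ℝ (Fin 2)), IsConnected (S ∪ A) → μH[1] St ≤ μH[1] S)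
    (hfin : μH[1] St < ⊤)
    (x : EuclideanSpace ℝ (Fin 2)) (r : ℝ)
    (hdisj : Metric.ball x r ∩ A = ∅) :
    μH[1] (St ∩ Metric.ball x r) ≤ ENNReal.ofReal (2 * π * r) := by
  rcases (St ∩ ball x r).eq_empty_or_nonempty with hempty | hmeets
  · simp [hempty]
  have hr : 0 < r := nonempty_ball.mp (hmeets.mono inter_subset_right)
  have hA : A \ ball x r = A := sdiff_eq_left.mpr (disjoint_iff_inter_eq_empty.mpr hdisj).symm
  have hcompetitor : IsConnected ((St \ ball x r) ∪ sphere x r ∪ A) := by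
    rw [union_right_comm, ← hA, ← union_sdiff_distrib]
    refine .sdiff_ball_union_sphere ?_ hconn.isPreconnected
      (hmeets.mono (inter_subset_inter_left _ subset_union_left))
    rw [← Module.finrank_eq_rank, finrank_euclideanSpace_fin]
    exact Nat.one_lt_ofNat
  exact (measure_inter_le_of_le_measure_sdiff_union measurableSet_ball hfin.ne
    (hmin _ hcompetitor)).trans (EuclideanSpace.hausdorffMeasure_sphere_le x hr.le)

/-- If the open disk `B_r(x)` is disjoint from the terminal set `A` of a planar
Steiner tree `St`, then the length of `St` inside the disk is at most `2πr`. -/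
theorem steiner_ball_length_le (A St : Set (EuclideanSpace ℝ (Fin 2)))
    (hA : IsCompact A)
    (hSt : IsConnected St)
    (hconn : IsConnected (St ∪ A))
    (hmin : ∀ S : Set (EuclideanSpace ℝ (Fin 2)), IsConnected (S ∪ A) → μH[1] St ≤ μH[1] S)
    (hfin : μH[1] St < ⊤)
    (x : EuclideanSpace ℝ (Fin 2)) (r : ℝ) (hr : 0 < r)
    (hdisj : Metric.ball x r ∩ A = ∅) :
    μH[1] (St ∩ Metric.ball x r) ≤ ENNReal.ofReal (2 * π * r) :=
  steiner_ball_length_le_general A St hconn hmin hfin x r hdisj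
end

section
/- Let d > 2 and let a, b > 0 with α = (d−1)/(d−2) > 1. Suppose f : [ρ, 1) → [0, ∞) is continuous, nondecreasing, bounded, and satisfies f(R) ≥ f(ρ) + b·∫_ρ^R f(r)^α dr for all R ∈ [ρ, 1). Then f(ρ) ≤ ((d−2)/(b(1−ρ)))^{d−2}. -/
open Set intervalIntegral Filter Topology

/-!
Let `m = d - 2` and `p = 1 / m`, so that `α = 1 + p`. The function
`G(R) = f(ρ) + b ∫_ρ^R f^α` lies between `f(ρ)` and `f`, hence satisfies the differential
inequality `G' = b f^α ≥ b G^(1+p)`. Then `R ↦ G(R)^(-p)` decreases with slope at most `-p b`,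
and since it stays positive, `p b (R - ρ) < f(ρ)^(-p)` for every `R < 1`. Letting `R → 1` gives
`f(ρ)^(-1/m) ≥ b (1 - ρ) / m`, i.e. `f(ρ) ≤ (m / (b (1 - ρ)))^m`.
-/

theorem hasDerivAt_integral_of_continuousOn_Icc {F : ℝ → ℝ} {a b x : ℝ}
    (hF : ContinuousOn F (Icc a b)) (hx : x ∈ Ioo a b) :
    HasDerivAt (fun u => ∫ r in a..u, F r) (F x) x :=
  integral_hasDerivAt_right
    ((hF.mono (Icc_subset_Icc_right hx.2.le)).intervalIntegrable_of_Icc hx.1.le)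
    ((hF.mono Ioo_subset_Icc_self).stronglyMeasurableAtFilter isOpen_Ioo x hx)
    (hF.continuousAt (Icc_mem_nhds hx.1 hx.2))

theorem mul_sub_le_rpow_neg_sub_of_le_deriv {G G' : ℝ → ℝ} {x y b p : ℝ} (hp : 0 < p)
    (hxy : x ≤ y) (hG : ContinuousOn G (Icc x y)) (hG_pos : ∀ t ∈ Icc x y, 0 < G t)
    (hG' : ∀ t ∈ Ioo x y, HasDerivAt G (G' t) t)
    (hle : ∀ t ∈ Ioo x y, b * G t ^ (1 + p) ≤ G' t) :
    p * b * (y - x) ≤ G x ^ (-p) - G y ^ (-p) := by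
  have hderiv : ∀ t ∈ Ioo x y,
      HasDerivAt (fun s => -G s ^ (-p)) (p * (G t ^ (-p - 1) * G' t)) t := by
    intro t ht
    exact ((hG' t ht).rpow_const (p := -p)
      (Or.inl (hG_pos t (Ioo_subset_Icc_self ht)).ne')).neg.congr_deriv (by ring)
  have hslope : ∀ t ∈ Ioo x y, p * b ≤ p * (G t ^ (-p - 1) * G' t) := by
    intro t ht
    have hGt := hG_pos t (Ioo_subset_Icc_self ht)
    refine mul_le_mul_of_nonneg_left ?_ hp.le
    calc b = G t ^ (-p - 1) * (b * G t ^ (1 + p)) := by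
          rw [show -p - 1 = -(1 + p) by ring, Real.rpow_neg hGt.le]
          field_simp
      _ ≤ G t ^ (-p - 1) * G' t := mul_le_mul_of_nonneg_left (hle t ht) (by positivity)
  have hcont : ContinuousOn (fun s => -G s ^ (-p)) (Icc x y) :=
    (hG.rpow_const fun t ht => Or.inl (hG_pos t ht).ne').neg
  have key := (convex_Icc x y).mul_sub_le_image_sub_of_le_deriv hcont
    (fun t ht => (hderiv t (by rwa [interior_Icc] at ht)).differentiableAt.differentiableWithinAt)
    (fun t ht => by
      rw [interior_Icc] at ht
      rw [(hderiv t ht).deriv]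
      exact hslope t ht)
    x (left_mem_Icc.2 hxy) y (right_mem_Icc.2 hxy) hxy
  linarith

theorem mul_sub_lt_rpow_neg_of_add_integral_le {f : ℝ → ℝ} {ρ R b p : ℝ} (hp : 0 < p)
    (hb : 0 ≤ b) (hρR : ρ ≤ R) (hf : ContinuousOn f (Icc ρ R))
    (hf_nonneg : ∀ r ∈ Icc ρ R, 0 ≤ f r) (hfρ : 0 < f ρ)
    (hineq : ∀ t ∈ Icc ρ R, f ρ + b * ∫ r in ρ..t, f r ^ (1 + p) ≤ f t) :
    p * b * (R - ρ) < f ρ ^ (-p) := by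
  set G : ℝ → ℝ := fun t => f ρ + b * ∫ r in ρ..t, f r ^ (1 + p)
  have hF : ContinuousOn (fun r => f r ^ (1 + p)) (Icc ρ R) :=
    hf.rpow_const fun _ _ => Or.inr (by linarith)
  have hG_ge : ∀ t ∈ Icc ρ R, f ρ ≤ G t := fun t ht => by
    have : 0 ≤ ∫ r in ρ..t, f r ^ (1 + p) := integral_nonneg ht.1 fun r hr =>
      Real.rpow_nonneg (hf_nonneg r ⟨hr.1, hr.2.trans ht.2⟩) _
    exact le_add_of_nonneg_right (mul_nonneg hb this)
  have hG_pos : ∀ t ∈ Icc ρ R, 0 < G t := fun t ht => hfρ.trans_le (hG_ge t ht)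
  have hG : ContinuousOn G (Icc ρ R) := by
    have := continuousOn_primitive_interval (μ := MeasureTheory.volume)
      (by rw [uIcc_of_le hρR]; exact hF.integrableOn_Icc)
    rw [uIcc_of_le hρR] at this
    exact continuousOn_const.add (continuousOn_const.mul this)
  have hG' : ∀ t ∈ Ioo ρ R, HasDerivAt G (b * f t ^ (1 + p)) t := fun t ht =>
    ((hasDerivAt_integral_of_continuousOn_Icc hF ht).const_mul b).const_add _
  have hle : ∀ t ∈ Ioo ρ R, b * G t ^ (1 + p) ≤ b * f t ^ (1 + p) := fun t ht => by
    have ht' := Ioo_subset_Icc_self ht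
    exact mul_le_mul_of_nonneg_left
      (Real.rpow_le_rpow (hG_pos t ht').le (hineq t ht') (by linarith)) hb
  have hGR : 0 < G R ^ (-p) := Real.rpow_pos_of_pos (hG_pos R (right_mem_Icc.2 hρR)) _
  have := mul_sub_le_rpow_neg_sub_of_le_deriv hp hρR hG hG_pos hG' hle
  simp only [G, integral_same, mul_zero, add_zero] at this hGR
  linarith

theorem mul_sub_le_rpow_neg_of_add_integral_le {f : ℝ → ℝ} {ρ c b p : ℝ} (hp : 0 < p)
    (hb : 0 ≤ b) (hρc : ρ < c) (hf : ContinuousOn f (Ico ρ c))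
    (hf_nonneg : ∀ r ∈ Ico ρ c, 0 ≤ f r) (hfρ : 0 < f ρ)
    (hineq : ∀ t ∈ Ico ρ c, f ρ + b * ∫ r in ρ..t, f r ^ (1 + p) ≤ f t) :
    p * b * (c - ρ) ≤ f ρ ^ (-p) := by
  have hlim : Tendsto (fun R => p * b * (R - ρ)) (𝓝[<] c) (𝓝 (p * b * (c - ρ))) :=
    tendsto_nhdsWithin_of_tendsto_nhds (by fun_prop : Continuous _).continuousAt
  refine le_of_tendsto hlim ?_
  filter_upwards [Ioo_mem_nhdsLT hρc] with R hR
  have hsub : Icc ρ R ⊆ Ico ρ c := Icc_subset_Ico_right hR.2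
  exact (mul_sub_lt_rpow_neg_of_add_integral_le hp hb hR.1.le (hf.mono hsub)
    (fun r hr => hf_nonneg r (hsub hr)) hfρ (fun t ht => hineq t (hsub ht))).le

theorem le_inv_pow_of_le_rpow_neg_inv {a c : ℝ} {m : ℕ} (hm : m ≠ 0) (ha : 0 < a) (hc : 0 < c)
    (h : c ≤ a ^ (-(m : ℝ)⁻¹)) : a ≤ c⁻¹ ^ m := by
  have hpow : (a ^ (-(m : ℝ)⁻¹)) ^ m = a⁻¹ := by
    rw [← Real.rpow_natCast, ← Real.rpow_mul ha.le, neg_mul,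
      inv_mul_cancel₀ (Nat.cast_ne_zero.2 hm), Real.rpow_neg_one]
  rw [inv_pow, le_inv_comm₀ ha (by positivity), ← hpow]
  exact pow_le_pow_left₀ hc.le h m

theorem ode_comparison_general (d : ℕ) (hd : 2 < d) (b : ℝ) (hb : 0 < b)
    (ρ : ℝ) (hρ : ρ ∈ Set.Ico (0 : ℝ) 1)
    (f : ℝ → ℝ)
    (hcont : ContinuousOn f (Set.Ico ρ 1))
    (hnonneg : ∀ r ∈ Set.Ico ρ 1, 0 ≤ f r)
    (hineq : ∀ R ∈ Set.Ico ρ 1,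
      f ρ + b * ∫ r in ρ..R, f r ^ (((d : ℝ) - 1) / ((d : ℝ) - 2)) ≤ f R) :
    f ρ ≤ (((d : ℝ) - 2) / (b * (1 - ρ))) ^ (d - 2) := by
  have hρ1 : 0 < 1 - ρ := sub_pos.2 hρ.2
  have hm : ((d - 2 : ℕ) : ℝ) = (d : ℝ) - 2 := by
    rw [Nat.cast_sub hd.le, Nat.cast_two]
  have hm_pos : (0 : ℝ) < ((d - 2 : ℕ) : ℝ) := by exact_mod_cast Nat.sub_pos_of_lt hd
  rcases le_or_gt (f ρ) 0 with hfρ | hfρ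
  · exact hfρ.trans (by rw [← hm]; positivity)
  have hα : ((d : ℝ) - 1) / ((d : ℝ) - 2) = 1 + ((d - 2 : ℕ) : ℝ)⁻¹ := by
    have : (d : ℝ) - 2 ≠ 0 := hm ▸ hm_pos.ne'
    rw [hm]; field_simp; ring
  rw [hα] at hineq
  have key := mul_sub_le_rpow_neg_of_add_integral_le (by positivity) hb.le hρ.2 hcont hnonneg
    hfρ hineq
  calc f ρ ≤ (((d - 2 : ℕ) : ℝ)⁻¹ * b * (1 - ρ))⁻¹ ^ (d - 2) :=
        le_inv_pow_of_le_rpow_neg_inv (by omega) hfρ (by positivity) key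
    _ = (((d : ℝ) - 2) / (b * (1 - ρ))) ^ (d - 2) := by
        rw [hm]; field_simp

/-- ODE-comparison lemma: a bounded nonnegative nondecreasing continuous
solution of `f(R) ≥ f(ρ) + b ∫_ρ^R f^α` on `[ρ,1)` with `α = (d-1)/(d-2)`
has initial value bounded by `((d-2)/(b(1-ρ)))^(d-2)`. -/
theorem ode_comparison (d : ℕ) (hd : 2 < d) (b : ℝ) (hb : 0 < b)
    (ρ : ℝ) (hρ : ρ ∈ Set.Ico (0 : ℝ) 1)
    (f : ℝ → ℝ)
    (hcont : ContinuousOn f (Set.Ico ρ 1))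
    (hmono : MonotoneOn f (Set.Ico ρ 1))
    (hnonneg : ∀ r ∈ Set.Ico ρ 1, 0 ≤ f r)
    (hbdd : ∃ M : ℝ, ∀ r ∈ Set.Ico ρ 1, f r ≤ M)
    (hineq : ∀ R ∈ Set.Ico ρ 1,
      f ρ + b * ∫ r in ρ..R, f r ^ (((d : ℝ) - 1) / ((d : ℝ) - 2)) ≤ f R) :
    f ρ ≤ (((d : ℝ) - 2) / (b * (1 - ρ))) ^ (d - 2) :=
  ode_comparison_general d hd b hb ρ hρ f hcont hnonneg hineq
end

section
/- Let a₁, …, a_n be points in a metric space and let MST denote a minimum spanning tree on these points with edge weights given by pairwise distances. Let St be any connected compact set containing all aᵢ. Then the total weight of MST is at most 2·H¹(St). -/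
open MeasureTheory Finset Metric

/-!
Run Kruskal's algorithm while growing a neighbourhood of each cluster inside `St`. A cluster `K`
with a connecting graph `T` and a radius `ρ` at most half the distance from `K` to the other points
pays for `length T / 2 + ρ` with the `μH[1]`-measure of the part of `St` within `ρ` of `K`. When the
two closest clusters, at distance `ℓ`, are merged, both neighbourhoods grow to the radius `ℓ / 2`
and stay disjoint. As `St` is connected and reaches the other cluster, the distance to a cluster
maps the new shell of `St` onto an interval of length `ℓ / 2 - ρ`, and a 1-Lipschitz map does not
increase `μH[1]`; so the two shells pay for the new edge of length `ℓ`. The last cluster yields a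
connected graph of length at most `2 μH[1] St`, and it contains a spanning tree.
-/

section TotalLength

variable {X ι : Type*} [MetricSpace X] [Fintype ι] (a : ι → X)

open Classical in
noncomputable def totalLength (T : SimpleGraph ι) : ℝ :=
  (1 / 2 : ℝ) * ∑ k, ∑ j, if T.Adj k j then dist (a k) (a j) else 0

theorem totalLength_eq (T : SimpleGraph ι) [DecidableRel T.Adj] :
    totalLength a T = (1 / 2 : ℝ) * ∑ k, ∑ j, if T.Adj k j then dist (a k) (a j) else 0 := by
  unfold totalLength
  congr!

variable {a}

theorem totalLength_mono {T T' : SimpleGraph ι} (h : T ≤ T') :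
    totalLength a T ≤ totalLength a T' := by
  unfold totalLength
  gcongr with k _ j _
  split_ifs with hT hT'
  exacts [le_rfl, absurd (h hT) hT', dist_nonneg, le_rfl]

theorem totalLength_sup_le (T T' : SimpleGraph ι) :
    totalLength a (T ⊔ T') ≤ totalLength a T + totalLength a T' := by
  unfold totalLength
  rw [← mul_add, ← sum_add_distrib]
  gcongr with k _
  rw [← sum_add_distrib]
  gcongr with j _
  by_cases hT : T.Adj k j <;> by_cases hT' : T'.Adj k j <;> simp [hT, hT', dist_nonneg]

theorem totalLength_edge_le [DecidableEq ι] (u v : ι) :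
    totalLength a (SimpleGraph.edge u v) ≤ dist (a u) (a v) := by
  rw [totalLength_eq]
  calc (1 / 2 : ℝ) * ∑ k, ∑ j, (if (SimpleGraph.edge u v).Adj k j then dist (a k) (a j) else 0)
      ≤ (1 / 2 : ℝ) * ∑ k, ∑ j, ((if k = u then if j = v then dist (a u) (a v) else 0 else 0) +
          (if k = v then if j = u then dist (a u) (a v) else 0 else 0)) := by
        gcongr with k _ j _
        split_ifs <;> simp_all [SimpleGraph.edge_adj, dist_comm]
    _ = dist (a u) (a v) := by
        simp only [sum_add_distrib, sum_ite_irrel, sum_ite_eq', mem_univ, ↓reduceIte,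
          sum_const_zero]
        ring

end TotalLength

section Shells

variable {X : Type*} [MetricSpace X] [MeasurableSpace X] [BorelSpace X] {S : Set X}

theorem ofReal_sub_le_hausdorffMeasure_inter_preimage_Ioo (hS : IsPreconnected S) {f : X → ℝ}
    (hf : LipschitzOnWith 1 f S) {x q : X} (hx : x ∈ S) (hq : q ∈ S) {b₁ b₂ : ℝ}
    (hfx : f x ≤ b₁) (hfq : b₂ ≤ f q) :
    ENNReal.ofReal (b₂ - b₁) ≤ μH[1] (S ∩ f ⁻¹' Set.Ioo b₁ b₂) := by
  have hsurj : Set.Ioo b₁ b₂ ⊆ f '' (S ∩ f ⁻¹' Set.Ioo b₁ b₂) := by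
    intro y hy
    obtain ⟨p, hp, rfl⟩ := hS.intermediate_value hx hq hf.continuousOn
      ⟨hfx.trans hy.1.le, hy.2.le.trans hfq⟩
    exact ⟨p, ⟨hp, hy⟩, rfl⟩
  calc ENNReal.ofReal (b₂ - b₁) = μH[1] (Set.Ioo b₁ b₂) := by
        rw [hausdorffMeasure_real, Real.volume_Ioo]
    _ ≤ μH[1] (f '' (S ∩ f ⁻¹' Set.Ioo b₁ b₂)) := measure_mono hsurj
    _ ≤ μH[1] (S ∩ f ⁻¹' Set.Ioo b₁ b₂) := by
        simpa using (hf.mono Set.inter_subset_left).hausdorffMeasure_image_le zero_le_one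

theorem hausdorffMeasure_restrict_thickening_add_le (hS : IsPreconnected S) {s : Set X} {x q : X}
    (hxS : x ∈ S) (hxs : x ∈ s) (hqS : q ∈ S) {ρ r : ℝ} (hρ : 0 ≤ ρ) (hρr : ρ ≤ r)
    (hq : r ≤ infDist q s) :
    μH[1].restrict S (thickening ρ s) + ENNReal.ofReal (r - ρ) ≤
      μH[1].restrict S (thickening r s) := by
  have hshell : (infDist · s) ⁻¹' Set.Ioo ρ r ⊆ thickening r s \ thickening ρ s := by
    intro p hp
    simp only [Set.mem_sdiff, mem_thickening_iff_infDist_lt ⟨x, hxs⟩, not_lt]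
    exact ⟨hp.2, hp.1.le⟩
  calc μH[1].restrict S (thickening ρ s) + ENNReal.ofReal (r - ρ)
      ≤ μH[1].restrict S (thickening ρ s) +
          μH[1].restrict S (thickening r s \ thickening ρ s) := by
        gcongr
        rw [Measure.restrict_apply (isOpen_thickening.measurableSet.diff
          isOpen_thickening.measurableSet), Set.inter_comm]
        refine (ofReal_sub_le_hausdorffMeasure_inter_preimage_Ioo hS
          (lipschitz_infDist_pt s).lipschitzOnWith hxS hqS ?_ hq).trans (measure_mono ?_)
        · rwa [infDist_zero_of_mem hxs]
        · exact Set.inter_subset_inter_right _ hshell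
    _ = μH[1].restrict S (thickening r s) := by
        rw [measure_add_sdiff isOpen_thickening.measurableSet.nullMeasurableSet,
          Set.union_eq_right.2 (thickening_mono hρr s)]

theorem ofReal_add_half_dist_le_restrict_thickening {ι : Type*} {a : ι → X}
    (hS : IsPreconnected S) (ha : ∀ i, a i ∈ S) {K : Finset ι} {u v : ι} (hu : u ∈ K)
    (hclosest : ∀ i ∈ K, dist (a u) (a v) ≤ dist (a i) (a v)) {c ρ : ℝ} (hρ : 0 ≤ ρ)
    (hρuv : 2 * ρ ≤ dist (a u) (a v))
    (hcharge : ENNReal.ofReal (c + ρ) ≤ μH[1].restrict S (thickening ρ (a '' K))) :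
    ENNReal.ofReal (c + dist (a u) (a v) / 2) ≤
      μH[1].restrict S (thickening (dist (a u) (a v) / 2) (a '' K)) := by
  have hfar : dist (a u) (a v) / 2 ≤ infDist (a v) (a '' K) :=
    (le_infDist ⟨a u, Set.mem_image_of_mem a hu⟩).2 <| by
      rintro _ ⟨i, hi, rfl⟩
      linarith [hclosest i hi, dist_comm (a i) (a v), dist_nonneg (x := a u) (y := a v)]
  calc ENNReal.ofReal (c + dist (a u) (a v) / 2)
      ≤ ENNReal.ofReal (c + ρ) + ENNReal.ofReal (dist (a u) (a v) / 2 - ρ) := by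
        rw [← add_sub_cancel ρ (dist (a u) (a v) / 2), ← add_assoc, add_sub_cancel]
        exact ENNReal.ofReal_add_le
    _ ≤ μH[1].restrict S (thickening (dist (a u) (a v) / 2) (a '' K)) :=
        (add_le_add hcharge le_rfl).trans <| hausdorffMeasure_restrict_thickening_add_le hS
          (ha u) (Set.mem_image_of_mem a hu) (ha v) hρ (by linarith) hfar

end Shells

section Clusters

variable {X ι : Type*} [MetricSpace X] [MeasurableSpace X] [BorelSpace X] [Fintype ι]
  (S : Set X) (a : ι → X)

def IsChargedCluster (K : Finset ι) : Prop :=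
  ∃ T : SimpleGraph ι, (∀ i ∈ K, ∀ j ∈ K, T.Reachable i j) ∧ ∃ ρ : ℝ, 0 ≤ ρ ∧
    (∀ i ∈ K, ∀ j ∉ K, 2 * ρ ≤ dist (a i) (a j)) ∧
    ENNReal.ofReal (totalLength a T / 2 + ρ) ≤ μH[1].restrict S (thickening ρ (a '' K))

variable {S a}

theorem isChargedCluster_singleton (i : ι) : IsChargedCluster S a {i} := by
  refine ⟨⊥, ?_, 0, le_rfl, by simp, ?_⟩
  · simp only [mem_singleton]
    rintro _ rfl _ rfl
    rfl
  · simp [totalLength]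

theorem IsChargedCluster.union [DecidableEq ι] (hS : IsPreconnected S) (ha : ∀ i, a i ∈ S)
    {K₁ K₂ : Finset ι} (h₁ : IsChargedCluster S a K₁) (h₂ : IsChargedCluster S a K₂)
    (hK : Disjoint K₁ K₂) {u v : ι} (hu : u ∈ K₁) (hv : v ∈ K₂)
    (hgap₁ : ∀ i ∈ K₁, ∀ j ∉ K₁, dist (a u) (a v) ≤ dist (a i) (a j))
    (hgap₂ : ∀ i ∈ K₂, ∀ j ∉ K₂, dist (a u) (a v) ≤ dist (a i) (a j)) :
    IsChargedCluster S a (K₁ ∪ K₂) := by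
  obtain ⟨T₁, hT₁, ρ₁, hρ₁, hsep₁, hcharge₁⟩ := h₁
  obtain ⟨T₂, hT₂, ρ₂, hρ₂, hsep₂, hcharge₂⟩ := h₂
  set ℓ := dist (a u) (a v)
  set T := T₁ ⊔ T₂ ⊔ SimpleGraph.edge u v
  have hvK₁ : v ∉ K₁ := disjoint_right.1 hK hv
  have huK₂ : u ∉ K₂ := disjoint_left.1 hK hu
  have hreach : ∀ i ∈ K₁ ∪ K₂, T.Reachable i u := by
    intro i hi
    rcases mem_union.1 hi with hi | hi
    · exact (hT₁ i hi u hu).mono (le_sup_left.trans le_sup_left)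
    · refine ((hT₂ i hi v hv).mono (le_sup_right.trans le_sup_left)).trans ?_
      have hvu : (SimpleGraph.edge u v).Adj v u :=
        (SimpleGraph.edge_adj ..).2 ⟨Or.inr ⟨rfl, rfl⟩, fun h => hvK₁ (h ▸ hu)⟩
      exact hvu.reachable.mono le_sup_right
  have hgrown₁ := ofReal_add_half_dist_le_restrict_thickening hS ha hu
    (fun i hi => hgap₁ i hi v hvK₁) hρ₁ (hsep₁ u hu v hvK₁) hcharge₁
  have hgrown₂ := ofReal_add_half_dist_le_restrict_thickening hS ha hv
    (fun j hj => by simpa only [dist_comm (a v)] using hgap₂ j hj u huK₂) hρ₂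
    (hsep₂ v hv u huK₂) hcharge₂
  rw [dist_comm (a v) (a u)] at hgrown₂
  have hdisj : Disjoint (thickening (ℓ / 2) (a '' K₁)) (thickening (ℓ / 2) (a '' K₂)) := by
    refine Set.disjoint_left.2 fun p hp₁ hp₂ => ?_
    obtain ⟨_, ⟨i, hi, rfl⟩, hpi⟩ := mem_thickening_iff.1 hp₁
    obtain ⟨_, ⟨j, hj, rfl⟩, hpj⟩ := mem_thickening_iff.1 hp₂
    linarith [hgap₁ i hi j (disjoint_right.1 hK hj), dist_triangle_left (a i) (a j) p]
  have hlength : totalLength a T ≤ totalLength a T₁ + totalLength a T₂ + ℓ :=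
    (totalLength_sup_le _ _).trans (add_le_add (totalLength_sup_le _ _) (totalLength_edge_le u v))
  refine ⟨T, fun i hi j hj => (hreach i hi).trans (hreach j hj).symm, ℓ / 2, by positivity,
    ?_, ?_⟩
  · intro i hi j hj
    rw [mem_union, not_or] at hj
    rcases mem_union.1 hi with hi | hi
    · linarith [hgap₁ i hi j hj.1]
    · linarith [hgap₂ i hi j hj.2]
  calc ENNReal.ofReal (totalLength a T / 2 + ℓ / 2)
      ≤ ENNReal.ofReal ((totalLength a T₁ / 2 + ℓ / 2) + (totalLength a T₂ / 2 + ℓ / 2)) :=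
        ENNReal.ofReal_le_ofReal (by linarith)
    _ ≤ μH[1].restrict S (thickening (ℓ / 2) (a '' K₁)) +
          μH[1].restrict S (thickening (ℓ / 2) (a '' K₂)) :=
        ENNReal.ofReal_add_le.trans (add_le_add hgrown₁ hgrown₂)
    _ = μH[1].restrict S (thickening (ℓ / 2) (a '' ↑(K₁ ∪ K₂))) := by
        rw [← measure_union hdisj isOpen_thickening.measurableSet, coe_union, Set.image_union,
          thickening_union]

end Clusters

section Partition

variable {ι : Type*}

structure IsPartitionMap (part : ι → Finset ι) : Prop where
  mem_self : ∀ i, i ∈ part i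
  eq_of_mem : ∀ {i j}, j ∈ part i → part j = part i

variable [DecidableEq ι]

def mergeParts (part : ι → Finset ι) (u v : ι) (i : ι) : Finset ι :=
  if i ∈ part u ∪ part v then part u ∪ part v else part i

variable {part : ι → Finset ι}

theorem IsPartitionMap.subset_mergeParts (h : IsPartitionMap part) (u v i : ι) :
    part i ⊆ mergeParts part u v i := by
  unfold mergeParts
  split_ifs with hi
  · rcases mem_union.1 hi with hi | hi
    · exact (h.eq_of_mem hi).le.trans subset_union_left
    · exact (h.eq_of_mem hi).le.trans subset_union_right
  · exact le_rfl

theorem IsPartitionMap.merge (h : IsPartitionMap part) (u v : ι) :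
    IsPartitionMap (mergeParts part u v) where
  mem_self i := h.subset_mergeParts u v i (h.mem_self i)
  eq_of_mem {i j} hj := by
    by_cases hi : i ∈ part u ∪ part v
    · rw [mergeParts, if_pos hi] at hj
      simp only [mergeParts, if_pos hi, if_pos hj]
    · rw [mergeParts, if_neg hi] at hj
      have hj' : j ∉ part u ∪ part v := fun hj' => hi <| by
        have := h.subset_mergeParts u v j
        rw [mergeParts, if_pos hj', h.eq_of_mem hj] at this
        exact this (h.mem_self i)
      simp only [mergeParts, if_neg hi, if_neg hj', h.eq_of_mem hj]

variable [Fintype ι]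

def separatedPairs (part : ι → Finset ι) : Finset (ι × ι) :=
  univ.filter fun p => p.2 ∉ part p.1

theorem IsPartitionMap.card_separatedPairs_mergeParts_lt (h : IsPartitionMap part) {u v : ι}
    (hv : v ∉ part u) :
    #(separatedPairs (mergeParts part u v)) < #(separatedPairs part) := by
  refine card_lt_card ((ssubset_iff_of_subset ?_).2 ⟨(u, v), ?_, ?_⟩)
  · intro p
    simp only [separatedPairs, mem_filter, mem_univ, true_and]
    exact mt (h.subset_mergeParts u v p.1 ·)
  · simpa [separatedPairs] using hv
  · simp [separatedPairs, mergeParts, h.mem_self]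

end Partition

section Kruskal

variable {X ι : Type*} [MetricSpace X] [MeasurableSpace X] [BorelSpace X] [Fintype ι]
  [DecidableEq ι] {S : Set X} {a : ι → X}

theorem IsPartitionMap.isChargedCluster_univ [Nonempty ι] (hS : IsPreconnected S)
    (ha : ∀ i, a i ∈ S) {part : ι → Finset ι} (hpart : IsPartitionMap part)
    (hcharged : ∀ i, IsChargedCluster S a (part i)) :
    IsChargedCluster S a univ := by
  rcases (separatedPairs part).eq_empty_or_nonempty with hempty | hne
  · inhabit ι
    have huniv : part default = univ := eq_univ_of_forall fun j => by
      by_contra hj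
      exact eq_empty_iff_forall_notMem.1 hempty (default, j) (by simpa [separatedPairs])
    exact huniv ▸ hcharged default
  obtain ⟨⟨u, v⟩, huv, hmin⟩ := exists_min_image _ (fun p => dist (a p.1) (a p.2)) hne
  have hv : v ∉ part u := by simpa [separatedPairs] using huv
  have hgap : ∀ w, ∀ i ∈ part w, ∀ j ∉ part w, dist (a u) (a v) ≤ dist (a i) (a j) := by
    intro w i hi j hj
    exact hmin (i, j) (by simpa [separatedPairs, hpart.eq_of_mem hi] using hj)
  have hdisj : Disjoint (part u) (part v) := disjoint_left.2 fun x hxu hxv => hv <| by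
    rw [← hpart.eq_of_mem hxu, hpart.eq_of_mem hxv]
    exact hpart.mem_self v
  have hmerged := (hcharged u).union hS ha (hcharged v) hdisj (hpart.mem_self u)
    (hpart.mem_self v) (hgap u) (hgap v)
  refine (hpart.merge u v).isChargedCluster_univ hS ha fun i => ?_
  unfold mergeParts
  split_ifs
  exacts [hmerged, hcharged i]
termination_by #(separatedPairs part)
decreasing_by exact hpart.card_separatedPairs_mergeParts_lt hv

theorem exists_isTree_totalLength_le [Nonempty ι] (hS : IsPreconnected S) (ha : ∀ i, a i ∈ S) :
    ∃ T : SimpleGraph ι, T.IsTree ∧ ENNReal.ofReal (totalLength a T) ≤ 2 * μH[1] S := by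
  have hsingletons : IsPartitionMap fun i : ι => {i} :=
    ⟨mem_singleton_self, fun hj => by rw [mem_singleton.1 hj]⟩
  obtain ⟨T, hreach, ρ, hρ, -, hcharge⟩ :=
    hsingletons.isChargedCluster_univ hS ha isChargedCluster_singleton
  have hT : T.Connected := .mk fun i j => hreach i (mem_univ i) j (mem_univ j)
  obtain ⟨T', hT'T, hT'⟩ := hT.exists_isTree_le
  refine ⟨T', hT', ?_⟩
  calc ENNReal.ofReal (totalLength a T')
      ≤ ENNReal.ofReal (totalLength a T) := ENNReal.ofReal_le_ofReal (totalLength_mono hT'T)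
    _ = 2 * ENNReal.ofReal (totalLength a T / 2) := by
        rw [← ENNReal.ofReal_ofNat, ← ENNReal.ofReal_mul zero_le_two, mul_div_cancel₀ _ two_ne_zero]
    _ ≤ 2 * μH[1] S := by
        gcongr
        calc ENNReal.ofReal (totalLength a T / 2)
            ≤ ENNReal.ofReal (totalLength a T / 2 + ρ) := ENNReal.ofReal_le_ofReal (by linarith)
          _ ≤ μH[1].restrict S Set.univ := hcharge.trans (measure_mono (Set.subset_univ _))
          _ = μH[1] S := Measure.restrict_apply_univ S

end Kruskal

theorem mst_le_two_steiner_general (X : Type*) [MetricSpace X] [MeasurableSpace X] [BorelSpace X]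
    (n : ℕ) (hn : 0 < n) (a : Fin n → X)
    (G : SimpleGraph (Fin n)) [DecidableRel G.Adj]
    (hmst : ∀ (G' : SimpleGraph (Fin n)) [DecidableRel G'.Adj], G'.IsTree →
      ((1 / 2 : ℝ) * ∑ k, ∑ j, if G.Adj k j then dist (a k) (a j) else 0)
        ≤ (1 / 2 : ℝ) * ∑ k, ∑ j, if G'.Adj k j then dist (a k) (a j) else 0)
    (St : Set X) (hconn : IsConnected St)
    (ha : ∀ i, a i ∈ St) :
    ENNReal.ofReal ((1 / 2 : ℝ) * ∑ k, ∑ j, if G.Adj k j then dist (a k) (a j) else 0)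
      ≤ 2 * μH[1] St := by
  classical
  have : Nonempty (Fin n) := ⟨⟨0, hn⟩⟩
  obtain ⟨T, hT, hTSt⟩ := exists_isTree_totalLength_le hconn.isPreconnected ha
  have hGT := hmst T hT
  rw [← totalLength_eq, ← totalLength_eq] at hGT
  rw [← totalLength_eq]
  exact (ENNReal.ofReal_le_ofReal hGT).trans hTSt

/-- Steiner ratio at most 2: in any metric space, the total weight of a minimum
spanning tree on points `a₁, …, a_n` is at most twice the length of any
connected compact set containing all the points. -/
theorem mst_le_two_steiner (X : Type*) [MetricSpace X] [MeasurableSpace X] [BorelSpace X]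
    (n : ℕ) (hn : 0 < n) (a : Fin n → X)
    (G : SimpleGraph (Fin n)) [DecidableRel G.Adj] (hG : G.IsTree)
    (hmst : ∀ (G' : SimpleGraph (Fin n)) [DecidableRel G'.Adj], G'.IsTree →
      ((1 / 2 : ℝ) * ∑ k, ∑ j, if G.Adj k j then dist (a k) (a j) else 0)
        ≤ (1 / 2 : ℝ) * ∑ k, ∑ j, if G'.Adj k j then dist (a k) (a j) else 0)
    (St : Set X) (hSt : IsCompact St) (hconn : IsConnected St)
    (ha : ∀ i, a i ∈ St) :
    ENNReal.ofReal ((1 / 2 : ℝ) * ∑ k, ∑ j, if G.Adj k j then dist (a k) (a j) else 0)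
      ≤ 2 * μH[1] St :=
  mst_le_two_steiner_general X n hn a G hmst St hconn ha
end

section
/- Consider the set A_bad = { (a/4^k, b/4^k) : a, b, k ∈ ℕ ∪ {0}, 0 ≤ a/4^k ≤ 1/2^k, 0 ≤ b/4^k ≤ 1/2^k } ⊆ ℝ². Every connected set S ⊆ ℝ² with A_bad ⊆ S satisfies H¹(S) = ∞. -/
open MeasureTheory Set
open scoped ENNReal NNReal

/-- distance between a coordinate projection is at most the Euclidean distance. -/
lemma coord_dist_le (p q : EuclideanSpace ℝ (Fin 2)) (i : Fin 2) :
    |p i - q i| ≤ dist p q := by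
  rw [EuclideanSpace.dist_eq]
  have h1 : |p i - q i| = Real.sqrt (dist (p i) (q i) ^ 2) := by
    rw [Real.sqrt_sq_eq_abs, Real.dist_eq, abs_abs]
  rw [h1]
  exact Real.sqrt_le_sqrt
    (Finset.single_le_sum (f := fun j => dist (p j) (q j) ^ 2)
      (fun j _ => sq_nonneg _) (Finset.mem_univ i))

/-- In a connected set, around each point the set has 1-dimensional Hausdorff
measure at least `r` within the closed ball of radius `r`, provided the set
reaches distance at least `r` from the point. -/
lemma key_ball_bound {X : Type*} [MetricSpace X] [MeasurableSpace X] [BorelSpace X]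
    {S : Set X} (h : IsPreconnected S) {x y : X} (hx : x ∈ S) (hy : y ∈ S)
    {r : ℝ} (hr : 0 ≤ r) (hxy : r ≤ dist x y) :
    ENNReal.ofReal r ≤ μH[1] (S ∩ Metric.closedBall x r) := by
  have hlip : LipschitzWith 1 (dist x) := LipschitzWith.dist_right x
  have himg : Set.Icc (0:ℝ) r ⊆ (dist x) '' (S ∩ Metric.closedBall x r) := by
    intro t ht
    have hconn : IsPreconnected ((dist x) '' S) := h.image _ hlip.continuous.continuousOn
    have h0 : (0:ℝ) ∈ (dist x) '' S := ⟨x, hx, dist_self x⟩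
    have hd : dist x y ∈ (dist x) '' S := ⟨y, hy, rfl⟩
    have ht' : t ∈ Set.Icc (0:ℝ) (dist x y) := ⟨ht.1, ht.2.trans hxy⟩
    obtain ⟨z, hz, hzt⟩ := hconn.ordConnected.out h0 hd ht'
    refine ⟨z, ⟨hz, ?_⟩, hzt⟩
    rw [Metric.mem_closedBall, dist_comm, hzt]
    exact ht.2
  calc ENNReal.ofReal r = μH[1] (Set.Icc (0:ℝ) r) := by
        rw [MeasureTheory.hausdorffMeasure_real, Real.volume_Icc, sub_zero]
    _ ≤ μH[1] ((dist x) '' (S ∩ Metric.closedBall x r)) := measure_mono himg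
    _ ≤ μH[1] (S ∩ Metric.closedBall x r) := by
        simpa using hlip.hausdorffMeasure_image_le (by norm_num : (0:ℝ) ≤ 1)
          (S ∩ Metric.closedBall x r)

/-- a point of the plane built from two reals -/
noncomputable def Pt (x y : ℝ) : EuclideanSpace ℝ (Fin 2) :=
  (WithLp.equiv 2 (Fin 2 → ℝ)).symm ![x, y]

@[simp] lemma Pt_apply0 (x y : ℝ) : Pt x y 0 = x := rfl
@[simp] lemma Pt_apply1 (x y : ℝ) : Pt x y 1 = y := rfl

/-- index type for the chosen points -/
abbrev Idx := Σ _ : ℕ, ℕ × ℕ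

/-- the center point associated to an index -/
noncomputable def Ctr (i : Idx) : EuclideanSpace ℝ (Fin 2) :=
  Pt ((i.2.1 : ℝ) / 4 ^ (i.1 + 1)) ((i.2.2 : ℝ) / 4 ^ (i.1 + 1))

/-- the radius associated to an index -/
noncomputable def Rad (i : Idx) : ℝ := 1 / (10 * 4 ^ (i.1 + 1))

/-- membership predicate -/
def Good (i : Idx) : Prop :=
  2 ^ i.1 < i.2.1 ∧ i.2.1 ≤ 2 ^ (i.1 + 1) ∧ i.2.2 ≤ 2 ^ (i.1 + 1)

lemma abs_nat_sub_ge_one {a b : ℕ} (h : a ≠ b) : (1:ℝ) ≤ |(a:ℝ) - (b:ℝ)| := by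
  have h' : ((a:ℤ) - (b:ℤ)) ≠ 0 := sub_ne_zero.2 (by exact_mod_cast h)
  have := Int.one_le_abs h'
  calc (1:ℝ) ≤ |((a:ℤ) - (b:ℤ) : ℤ)| := by exact_mod_cast this
    _ = |(a:ℝ) - (b:ℝ)| := by push_cast; rfl

lemma rad_sum_lt {i j : Idx} (hij : i.1 ≤ j.1) :
    Rad i + Rad j < 1 / 4 ^ (i.1 + 1) := by
  have hA : (0:ℝ) < 4 ^ (i.1 + 1) := by positivity
  have hB : (0:ℝ) < 4 ^ (j.1 + 1) := by positivity
  have h4 : (4:ℝ) ^ (i.1 + 1) ≤ 4 ^ (j.1 + 1) :=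
    pow_le_pow_right₀ (by norm_num) (by omega)
  have h1 : Rad j ≤ Rad i := by
    unfold Rad
    exact one_div_le_one_div_of_le (by positivity) (by nlinarith)
  have h2 : Rad i < 1 / (2 * 4 ^ (i.1 + 1)) := by
    unfold Rad
    rw [div_lt_div_iff₀ (by positivity) (by positivity)]
    nlinarith
  have h3 : (1:ℝ) / (2 * 4 ^ (i.1 + 1)) + 1 / (2 * 4 ^ (i.1 + 1)) = 1 / 4 ^ (i.1 + 1) := by
    field_simp
    ring
  linarith

/-- centers of good indices are separated -/
lemma ctr_sep {i j : Idx} (hi : Good i) (hj : Good j) (hij : i.1 ≤ j.1) (hne : i ≠ j) :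
    1 / 4 ^ (i.1 + 1) ≤ dist (Ctr i) (Ctr j) := by
  obtain ⟨k, a, b⟩ := i
  obtain ⟨l, c, d⟩ := j
  simp only at hij
  obtain ⟨hi1, hi2, hi3⟩ := hi
  obtain ⟨hj1, hj2, hj3⟩ := hj
  have hpos : (0:ℝ) < 4 ^ (k + 1) := by positivity
  have hc0 : Ctr ⟨k,(a,b)⟩ 0 = (a:ℝ) / 4 ^ (k+1) := rfl
  have hc1 : Ctr ⟨k,(a,b)⟩ 1 = (b:ℝ) / 4 ^ (k+1) := rfl
  rcases eq_or_lt_of_le hij with heq | hlt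
  · -- same level
    subst heq
    have hd0 : Ctr ⟨k,(c,d)⟩ 0 = (c:ℝ) / 4 ^ (k+1) := rfl
    have hd1 : Ctr ⟨k,(c,d)⟩ 1 = (d:ℝ) / 4 ^ (k+1) := rfl
    have hab : a ≠ c ∨ b ≠ d := by
      by_contra hcon
      push_neg at hcon
      exact hne (by simp [hcon.1, hcon.2])
    show 1 / (4:ℝ) ^ (k + 1) ≤ dist (Ctr ⟨k,(a,b)⟩) (Ctr ⟨k,(c,d)⟩)
    rcases hab with hac | hbd
    · calc 1 / (4:ℝ) ^ (k + 1) ≤ |(a:ℝ) - (c:ℝ)| / 4 ^ (k+1) := by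
            apply div_le_div_of_nonneg_right ?_ hpos.le
            exact abs_nat_sub_ge_one hac
        _ = |(a:ℝ)/4^(k+1) - (c:ℝ)/4^(k+1)| := by
            rw [div_sub_div_same, abs_div, abs_of_pos hpos]
        _ = |Ctr ⟨k,(a,b)⟩ 0 - Ctr ⟨k,(c,d)⟩ 0| := by rw [hc0, hd0]
        _ ≤ dist (Ctr ⟨k,(a,b)⟩) (Ctr ⟨k,(c,d)⟩) := coord_dist_le _ _ 0
    · calc 1 / (4:ℝ) ^ (k + 1) ≤ |(b:ℝ) - (d:ℝ)| / 4 ^ (k+1) := by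
            apply div_le_div_of_nonneg_right ?_ hpos.le
            exact abs_nat_sub_ge_one hbd
        _ = |(b:ℝ)/4^(k+1) - (d:ℝ)/4^(k+1)| := by
            rw [div_sub_div_same, abs_div, abs_of_pos hpos]
        _ = |Ctr ⟨k,(a,b)⟩ 1 - Ctr ⟨k,(c,d)⟩ 1| := by rw [hc1, hd1]
        _ ≤ dist (Ctr ⟨k,(a,b)⟩) (Ctr ⟨k,(c,d)⟩) := coord_dist_le _ _ 1
  · -- different levels : k < l.  x-coordinates are far apart.
    have hd0 : Ctr ⟨l,(c,d)⟩ 0 = (c:ℝ) / 4 ^ (l+1) := rfl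
    have hx1 : ((2:ℝ) ^ k + 1) / 4 ^ (k+1) ≤ (a:ℝ) / 4 ^ (k+1) := by
      apply div_le_div_of_nonneg_right ?_ hpos.le
      have h : 2^k + 1 ≤ a := hi1
      have h' : ((2^k + 1 : ℕ) : ℝ) ≤ (a:ℝ) := by exact_mod_cast h
      push_cast at h'
      linarith
    have hx2 : (c:ℝ) / 4 ^ (l+1) ≤ (2:ℝ) ^ k / 4 ^ (k+1) := by
      have h1 : (c:ℝ) / 4 ^ (l+1) ≤ (2:ℝ)^(l+1) / 4 ^ (l+1) := by
        apply div_le_div_of_nonneg_right ?_ (by positivity)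
        exact_mod_cast hj2
      have h2 : (2:ℝ)^(l+1) / 4 ^ (l+1) = 1 / 2 ^ (l+1) := by
        rw [div_eq_div_iff (by positivity) (by positivity), one_mul, ← mul_pow]
        norm_num
      have h3 : (2:ℝ)^k / 4^(k+1) = 1 / 2^(k+2) := by
        rw [div_eq_div_iff (by positivity) (by positivity), one_mul, ← pow_add]
        have h5 : (4:ℝ)^(k+1) = 2^(2*(k+1)) := by
          rw [pow_mul]; norm_num
        rw [h5]
        congr 1
        omega
      have h4 : (1:ℝ) / 2^(l+1) ≤ 1 / 2^(k+2) := by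
        apply one_div_le_one_div_of_le (by positivity)
        apply pow_le_pow_right₀ (by norm_num) (by omega)
      rw [h2] at h1
      rw [h3]
      linarith
    show 1 / (4:ℝ) ^ (k + 1) ≤ dist (Ctr ⟨k,(a,b)⟩) (Ctr ⟨l,(c,d)⟩)
    calc 1 / (4:ℝ) ^ (k + 1)
        = ((2:ℝ)^k + 1) / 4^(k+1) - (2:ℝ)^k / 4^(k+1) := by ring
      _ ≤ (a:ℝ) / 4 ^ (k+1) - (c:ℝ) / 4 ^ (l+1) := by linarith
      _ ≤ |(a:ℝ) / 4 ^ (k+1) - (c:ℝ) / 4 ^ (l+1)| := le_abs_self _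
      _ = |Ctr ⟨k,(a,b)⟩ 0 - Ctr ⟨l,(c,d)⟩ 0| := by rw [hc0, hd0]
      _ ≤ dist (Ctr ⟨k,(a,b)⟩) (Ctr ⟨l,(c,d)⟩) := coord_dist_le _ _ 0

/-- The compact set `A_bad` from Example 1: every connected subset of the plane
containing `A_bad` has infinite length. -/
theorem Abad_infinite_length
    (Abad : Set (EuclideanSpace ℝ (Fin 2)))
    (hAbad : Abad = { p : EuclideanSpace ℝ (Fin 2) |
      ∃ a b k : ℕ, p 0 = (a : ℝ) / 4 ^ k ∧ p 1 = (b : ℝ) / 4 ^ k ∧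
        (a : ℝ) / 4 ^ k ≤ 1 / 2 ^ k ∧ (b : ℝ) / 4 ^ k ≤ 1 / 2 ^ k })
    (S : Set (EuclideanSpace ℝ (Fin 2)))
    (hsub : Abad ⊆ S) (hconn : IsConnected S) :
    μH[1] S = ⊤ := by
  classical
  -- the finite index sets
  set T : ℕ → Finset Idx := fun n =>
    (Finset.range n).sigma (fun k =>
      (Finset.Ioc (2 ^ k) (2 ^ (k+1))) ×ˢ (Finset.range (2 ^ (k+1) + 1))) with hT
  have hGood : ∀ {n : ℕ} {i : Idx}, i ∈ T n → Good i := by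
    intro n i hi
    obtain ⟨k, a, b⟩ := i
    simp only [hT, Finset.mem_sigma, Finset.mem_product, Finset.mem_Ioc,
      Finset.mem_range] at hi
    exact ⟨hi.2.1.1, hi.2.1.2, Nat.lt_succ_iff.mp hi.2.2⟩
  -- a natural number divided: (a : ℝ)/4^m ≤ 1/2^m when a ≤ 2^m
  have hdiv : ∀ (a m : ℕ), a ≤ 2 ^ m → (a:ℝ) / 4 ^ m ≤ 1 / 2 ^ m := by
    intro a m ha
    rw [div_le_div_iff₀ (by positivity) (by positivity), one_mul]
    have h4 : (4:ℝ) ^ m = 2 ^ m * 2 ^ m := by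
      rw [← mul_pow]; norm_num
    rw [h4]
    have : (a:ℝ) ≤ 2 ^ m := by exact_mod_cast ha
    nlinarith [pow_pos (by norm_num : (0:ℝ) < 2) m]
  -- every center belongs to Abad, hence to S
  have hCmem : ∀ {n : ℕ} {i : Idx}, i ∈ T n → Ctr i ∈ S := by
    intro n i hi
    obtain ⟨h1, h2, h3⟩ := hGood hi
    apply hsub
    rw [hAbad]
    exact ⟨i.2.1, i.2.2, i.1 + 1, rfl, rfl, hdiv _ _ h2, hdiv _ _ h3⟩
  -- the far point (1,0)
  have hy0 : Pt 1 0 ∈ S := by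
    apply hsub
    rw [hAbad]
    refine ⟨1, 0, 0, ?_, ?_, by norm_num, by norm_num⟩ <;> simp
  -- distance from each center to the far point is at least its radius
  have hfar : ∀ {n : ℕ} {i : Idx}, i ∈ T n → Rad i ≤ dist (Ctr i) (Pt 1 0) := by
    intro n i hi
    obtain ⟨h1, h2, h3⟩ := hGood hi
    have hx : Ctr i 0 ≤ 1/2 := by
      have := hdiv i.2.1 (i.1+1) h2
      have h5 : (1:ℝ) / 2 ^ (i.1+1) ≤ 1/2 := by
        apply div_le_div_of_nonneg_left (by norm_num) (by norm_num)
        calc (2:ℝ) = 2^1 := by norm_num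
          _ ≤ 2^(i.1+1) := pow_le_pow_right₀ (by norm_num) (by omega)
      calc Ctr i 0 = (i.2.1:ℝ) / 4 ^ (i.1+1) := rfl
        _ ≤ 1 / 2 ^ (i.1+1) := this
        _ ≤ 1/2 := h5
    have hrad : Rad i ≤ 1/2 := by
      unfold Rad
      apply div_le_div_of_nonneg_left (by norm_num) (by norm_num)
      have : (4:ℝ) ^ (i.1+1) ≥ 1 := one_le_pow₀ (by norm_num)
      nlinarith
    have hd : (1:ℝ)/2 ≤ dist (Ctr i) (Pt 1 0) := by
      calc (1:ℝ)/2 ≤ |Ctr i 0 - Pt 1 0 0| := by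
            rw [Pt_apply0, abs_sub_comm]
            rw [abs_of_nonneg (by linarith)]
            linarith
        _ ≤ dist (Ctr i) (Pt 1 0) := coord_dist_le _ _ 0
    linarith
  -- the balls
  set B : Idx → Set (EuclideanSpace ℝ (Fin 2)) := fun i =>
    Metric.closedBall (Ctr i) (Rad i) with hB
  have hradpos : ∀ i : Idx, 0 < Rad i := by
    intro i; unfold Rad; positivity
  -- pairwise disjoint
  have hdisj : ∀ n : ℕ, (↑(T n) : Set Idx).PairwiseDisjoint B := by
    intro n i hi j hj hne
    have hGi := hGood (n := n) hi
    have hGj := hGood (n := n) hj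
    have main : ∀ i' j' : Idx, Good i' → Good j' → i'.1 ≤ j'.1 → i' ≠ j' →
        Disjoint (B i') (B j') := by
      intro i' j' hgi hgj hle hne'
      apply Metric.closedBall_disjoint_closedBall
      calc Rad i' + Rad j' < 1 / 4 ^ (i'.1 + 1) := rad_sum_lt hle
        _ ≤ dist (Ctr i') (Ctr j') := ctr_sep hgi hgj hle hne'
    rcases le_total i.1 j.1 with hle | hle
    · exact main i j hGi hGj hle hne
    · exact (main j i hGj hGi hle (Ne.symm hne)).symm
  -- lower bound for each ball
  have hball : ∀ {n : ℕ} {i : Idx}, i ∈ T n →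
      ENNReal.ofReal (Rad i) ≤ (μH[1]).restrict S (B i) := by
    intro n i hi
    rw [hB, Measure.restrict_apply measurableSet_closedBall, Set.inter_comm]
    exact key_ball_bound hconn.isPreconnected (hCmem hi) hy0
      (le_of_lt (hradpos i)) (hfar hi)
  -- the main estimate
  have hmain : ∀ n : ℕ, (n : ℝ≥0∞) * ENNReal.ofReal (1/20) ≤ μH[1] S := by
    intro n
    have hsum : (n : ℝ≥0∞) * ENNReal.ofReal (1/20) ≤
        ∑ i ∈ T n, ENNReal.ofReal (Rad i) := by
      rw [hT, Finset.sum_sigma]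
      have hfib : ∀ k ∈ Finset.range n,
          ENNReal.ofReal (1/20) ≤
          ∑ p ∈ (Finset.Ioc (2 ^ k) (2 ^ (k+1))) ×ˢ (Finset.range (2 ^ (k+1) + 1)),
            ENNReal.ofReal (Rad ⟨k, p⟩) := by
        intro k _
        have hRad : ∀ p : ℕ × ℕ, Rad (⟨k, p⟩ : Idx) = 1 / (10 * 4 ^ (k+1)) := fun _ => rfl
        simp only [hRad]
        rw [Finset.sum_const, Finset.card_product, Nat.card_Ioc, Finset.card_range]
        have hcard : 2 ^ (k+1) - 2 ^ k = 2 ^ k := by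
          rw [pow_succ]; omega
        rw [hcard, nsmul_eq_mul]
        have hc : ((2 ^ k * (2 ^ (k+1) + 1) : ℕ) : ℝ≥0∞)
            = ENNReal.ofReal ((2 ^ k * (2 ^ (k+1) + 1) : ℕ) : ℝ) := by
          rw [ENNReal.ofReal_natCast]
        rw [hc, ← ENNReal.ofReal_mul (by positivity)]
        apply ENNReal.ofReal_le_ofReal
        have h1 : ((2 ^ k * (2 ^ (k+1) + 1) : ℕ) : ℝ) ≥ 2 ^ k * 2 ^ (k+1) := by
          push_cast
          nlinarith [pow_pos (by norm_num : (0:ℝ) < 2) k,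
            pow_pos (by norm_num : (0:ℝ) < 2) (k+1)]
        have h2 : (2:ℝ) ^ k * 2 ^ (k+1) * (1 / (10 * 4 ^ (k+1))) = 1/20 := by
          have h4 : (4:ℝ) ^ (k+1) = 2 ^ (k+1) * 2 ^ (k+1) := by
            rw [← mul_pow]; norm_num
          have h5 : (2:ℝ) ^ (k+1) = 2 * 2 ^ k := by rw [pow_succ]; ring
          field_simp
          rw [h4, h5]
          ring
        calc (1:ℝ)/20 = 2 ^ k * 2 ^ (k+1) * (1 / (10 * 4 ^ (k+1))) := h2.symm
          _ ≤ ((2 ^ k * (2 ^ (k+1) + 1) : ℕ) : ℝ) * (1 / (10 * 4 ^ (k+1))) := by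
              apply mul_le_mul_of_nonneg_right h1 (by positivity)
      calc (n : ℝ≥0∞) * ENNReal.ofReal (1/20)
          = ∑ _k ∈ Finset.range n, ENNReal.ofReal (1/20) := by
            rw [Finset.sum_const, Finset.card_range, nsmul_eq_mul]
        _ ≤ _ := Finset.sum_le_sum hfib
    calc (n : ℝ≥0∞) * ENNReal.ofReal (1/20)
        ≤ ∑ i ∈ T n, ENNReal.ofReal (Rad i) := hsum
      _ ≤ ∑ i ∈ T n, (μH[1]).restrict S (B i) :=
          Finset.sum_le_sum (fun i hi => hball hi)
      _ = (μH[1]).restrict S (⋃ i ∈ T n, B i) :=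
          (measure_biUnion_finset (hdisj n) (fun i _ => measurableSet_closedBall)).symm
      _ ≤ (μH[1]).restrict S Set.univ := measure_mono (Set.subset_univ _)
      _ = μH[1] S := Measure.restrict_apply_univ S
  -- conclude
  apply ENNReal.eq_top_of_forall_nnreal_le
  intro r
  obtain ⟨n, hn⟩ := exists_nat_ge (20 * (r : ℝ))
  calc (r : ℝ≥0∞) = ENNReal.ofReal (r : ℝ) := ENNReal.ofReal_coe_nnreal.symm
    _ ≤ ENNReal.ofReal ((n : ℝ) * (1/20)) := by
        apply ENNReal.ofReal_le_ofReal
        linarith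
    _ = (n : ℝ≥0∞) * ENNReal.ofReal (1/20) := by
        rw [ENNReal.ofReal_mul (by positivity), ENNReal.ofReal_natCast]
    _ ≤ μH[1] S := hmain n
end
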